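/- arXiv:0710.0813 — 11 statements merged into one kernel-verified Lean document; each statement's English description precedes it below -/
import Mathlib

section
/- Let R be a commutative ring and M a non-zero R-module. Define M^♯ = {s ∈ R : sM ⊊ M}. Then if R is a valuation ring (i.e., R is uniserial as a module over itself), M^♯ is a prime ideal of R. -/
open Pointwise

section Defs
universe u v
variable (R : Type u) [CommRing R]

/-- `U` is a pure submodule of its ambient module: `rU = U ∩ rM` for all `r`. -/
def IsPureSub {M : Type v} [AddCommGroup M] [Module R M] (U : Submodule R M) : Prop :=
  ∀ (r : R) (x : M), x ∈ U → (∃ m : M, r • m = x) → ∃ u ∈ U, r • u = x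

/-- `U` is uniserial: its submodules are totally ordered by inclusion. -/
def IsUniserialSub {M : Type v} [AddCommGroup M] [Module R M] (U : Submodule R M) : Prop :=
  ∀ A B : Submodule R ↥U, A ≤ B ∨ B ≤ A

/-- `U` is a direct summand of its ambient module. -/
def IsSummand {M : Type v} [AddCommGroup M] [Module R M] (U : Submodule R M) : Prop :=
  ∃ V : Submodule R M, IsCompl U V

/-- A (torsion-free) module is separable if every pure uniserial submodule is a summand. -/
def IsSeparableMod (M : Type v) [AddCommGroup M] [Module R M] : Prop :=
  ∀ U : Submodule R M, IsPureSub R U → IsUniserialSub R U → IsSummand R U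

/-- `R/A` is complete in the `R/A`-topology: every coherent family of cosets
`(aᵢ + Bᵢ)` with `⋂ᵢ Bᵢ = A` has a common point. -/
def IsCompleteQuot (A : Ideal R) : Prop :=
  ∀ (ι : Type u) (a : ι → R) (B : ι → Ideal R),
    (∀ i, A ≤ B i) → (∀ i j, B i ≤ B j → a i - a j ∈ B j) → (⨅ i, B i) = A →
    ∃ c : R, ∀ i, c - a i ∈ B i

/-- A valuation ring with maximal ideal `P` is maximal: `R/A` is complete in the
`R/A`-topology for every proper ideal `A` with `A ≠ Pa` for all nonzero `a`. -/
def IsMaximalVD (P : Ideal R) : Prop :=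
  ∀ A : Ideal R, A ≠ ⊤ → (∀ a : R, a ≠ 0 → A ≠ Ideal.span {a} * P) → IsCompleteQuot R A

/-- A module `M` is slender if every homomorphism `R^ℕ → M` kills almost all
standard unit vectors. -/
def IsSlender (M : Type v) [AddCommGroup M] [Module R M] : Prop :=
  ∀ f : ((ℕ → R) →ₗ[R] M), ∃ n₀ : ℕ, ∀ n ≥ n₀, f (Pi.single n 1) = 0

end Defs


section Aux
open Pointwise
universe u v
variable {R : Type u} [CommRing R] {M : Type v} [AddCommGroup M] [Module R M]

private lemma dvd_smul_top_le {a b : R} (h : b ∣ a) :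
    a • (⊤ : Submodule R M) ≤ b • (⊤ : Submodule R M) := by
  obtain ⟨c, rfl⟩ := h
  rw [mul_smul]
  intro x hx
  rw [← SetLike.mem_coe, Submodule.coe_pointwise_smul] at hx
  obtain ⟨y, -, rfl⟩ := hx
  exact Submodule.smul_mem_pointwise_smul _ _ _ trivial

end Aux

/-- If `R` is a valuation ring (its ideals are totally ordered) and `M` is a
non-zero `R`-module, then `M^♯ = {s : sM ⊊ M}` is a prime ideal of `R`. -/
theorem stmt_0 {R : Type u} [CommRing R]
    (hval : ∀ A B : Ideal R, A ≤ B ∨ B ≤ A)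
    (M : Type v) [AddCommGroup M] [Module R M] [Nontrivial M] :
    ∃ I : Ideal R, I.IsPrime ∧ ∀ s : R, s ∈ I ↔ s • (⊤ : Submodule R M) ≠ ⊤ := by
  refine ⟨{ carrier := {s | s • (⊤ : Submodule R M) ≠ ⊤}
            add_mem' := ?_
            zero_mem' := ?_
            smul_mem' := ?_ }, ?_, fun s => Iff.rfl⟩
  · intro a b ha hb
    rcases hval (Ideal.span {a}) (Ideal.span {b}) with h | h
    · have hd : b ∣ a := Ideal.mem_span_singleton.mp (h (Ideal.mem_span_singleton_self a))
      obtain ⟨c, rfl⟩ := hd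
      intro hcon
      apply hb
      have : (b * c + b) • (⊤ : Submodule R M) ≤ b • ⊤ := by
        have : b ∣ b * c + b := ⟨c + 1, by ring⟩
        exact dvd_smul_top_le this
      rw [hcon] at this
      exact top_le_iff.mp this
    · have hd : a ∣ b := Ideal.mem_span_singleton.mp (h (Ideal.mem_span_singleton_self b))
      obtain ⟨c, rfl⟩ := hd
      intro hcon
      apply ha
      have : (a + a * c) • (⊤ : Submodule R M) ≤ a • ⊤ := by
        have : a ∣ a + a * c := ⟨1 + c, by ring⟩
        exact dvd_smul_top_le this
      rw [hcon] at this
      exact top_le_iff.mp this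
  · intro hcon
    rw [zero_smul, Submodule.zero_eq_bot] at hcon
    exact absurd hcon bot_ne_top
  · intro c a ha hcon
    apply ha
    have : (c * a) • (⊤ : Submodule R M) ≤ a • ⊤ := dvd_smul_top_le (Dvd.intro_left c rfl)
    rw [smul_eq_mul] at hcon
    rw [hcon] at this
    exact top_le_iff.mp this
  · constructor
    · intro h
      have h1 : (1 : R) • (⊤ : Submodule R M) ≠ ⊤ := by
        have := h ▸ (Submodule.mem_top : (1 : R) ∈ (⊤ : Ideal R))
        exact this
      exact h1 (one_smul _ _)
    · intro a b hab
      by_contra hcon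
      push_neg at hcon
      obtain ⟨ha, hb⟩ := hcon
      simp only [Submodule.mem_mk, AddSubmonoid.mem_mk, AddSubsemigroup.mem_mk,
        Set.mem_setOf_eq, not_ne_iff] at ha hb hab
      exact hab (by rw [mul_smul, hb, ha])
end

section
/- Let R be a valuation domain and M a torsion-free R-module. Then every element x of M is contained in a pure uniserial submodule of M, namely the inverse image of the torsion submodule of M/Rx under the canonical map M → M/Rx. -/
open Pointwise

/-- over a valuation domain, every element `x` of a torsion-free module `M`
lies in a pure uniserial submodule, namely the preimage of the torsion submodule of
`M/Rx` under the canonical map. -/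
theorem stmt_1 {R : Type u} [CommRing R] [IsDomain R] [ValuationRing R]
    {M : Type v} [AddCommGroup M] [Module R M] [NoZeroSMulDivisors R M] (x : M) :
    x ∈ (Submodule.torsion R (M ⧸ Submodule.span R {x})).comap (Submodule.span R {x}).mkQ ∧
    IsPureSub R ((Submodule.torsion R (M ⧸ Submodule.span R {x})).comap
      (Submodule.span R {x}).mkQ) ∧
    IsUniserialSub R ((Submodule.torsion R (M ⧸ Submodule.span R {x})).comap
      (Submodule.span R {x}).mkQ) := by
  set N : Submodule R M := Submodule.span R {x} with hN
  set U : Submodule R M := (Submodule.torsion R (M ⧸ N)).comap N.mkQ with hU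
  have memU : ∀ m : M, m ∈ U ↔ ∃ r : R, r ≠ 0 ∧ ∃ s : R, r • m = s • x := by
    intro m
    constructor
    · rintro ⟨⟨r, hr⟩, h⟩
      refine ⟨r, mem_nonZeroDivisors_iff_ne_zero.mp hr, ?_⟩
      have h2 : N.mkQ (r • m) = 0 := by
        rw [map_smul]; exact h
      rw [Submodule.mkQ_apply, Submodule.Quotient.mk_eq_zero] at h2
      obtain ⟨s, hs⟩ := Submodule.mem_span_singleton.mp h2
      exact ⟨s, hs.symm⟩
    · rintro ⟨r, hr, s, hs⟩
      refine ⟨⟨r, mem_nonZeroDivisors_iff_ne_zero.mpr hr⟩, ?_⟩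
      show r • N.mkQ m = 0
      rw [← map_smul, Submodule.mkQ_apply, Submodule.Quotient.mk_eq_zero, hs]
      exact Submodule.smul_mem _ s (Submodule.mem_span_singleton_self x)
  have comp : ∀ u v : M, u ∈ U → v ∈ U →
      (∃ t : R, t • v = u) ∨ (∃ t : R, t • u = v) := by
    intro u v hu hv
    obtain ⟨r, hr, s, hrs⟩ := (memU u).mp hu
    obtain ⟨r', hr', s', hrs'⟩ := (memU v).mp hv
    have key : (s' * r) • u = (s * r') • v := by
      rw [mul_smul, mul_smul, hrs, hrs', smul_comm]
    obtain ⟨t, ht | ht⟩ := ValuationRing.cond (s' * r) (s * r')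
    · by_cases h0 : s' * r = 0
      · have hs'0 : s' = 0 := by
          rcases mul_eq_zero.mp h0 with h | h
          · exact h
          · exact absurd h hr
        have hv0 : v = 0 := by
          have h3 := hrs'
          rw [hs'0, zero_smul] at h3
          exact (smul_eq_zero.mp h3).resolve_left hr'
        right; exact ⟨0, by simp [hv0]⟩
      · left
        refine ⟨t, smul_right_injective M h0 ?_⟩
        show (s' * r) • (t • v) = (s' * r) • u
        rw [smul_smul, ht, key]
    · by_cases h0 : s * r' = 0
      · have hs0 : s = 0 := by
          rcases mul_eq_zero.mp h0 with h | h
          · exact h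
          · exact absurd h hr'
        have hu0 : u = 0 := by
          have h3 := hrs
          rw [hs0, zero_smul] at h3
          exact (smul_eq_zero.mp h3).resolve_left hr
        left; exact ⟨0, by simp [hu0]⟩
      · right
        refine ⟨t, smul_right_injective M h0 ?_⟩
        show (s * r') • (t • u) = (s * r') • v
        rw [smul_smul, ht, ← key]
  refine ⟨?_, ?_, ?_⟩
  · exact (memU x).mpr ⟨1, one_ne_zero, 1, rfl⟩
  · intro r y hy hdvd
    by_cases hr : r = 0
    · obtain ⟨m, hm⟩ := hdvd
      refine ⟨0, Submodule.zero_mem _, ?_⟩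
      rw [← hm, hr, zero_smul, zero_smul]
    · obtain ⟨m, hm⟩ := hdvd
      obtain ⟨s, hs, t, hst⟩ := (memU y).mp hy
      refine ⟨m, (memU m).mpr ⟨s * r, mul_ne_zero hs hr, t, ?_⟩, hm⟩
      rw [mul_smul, hm, hst]
  · intro A B
    by_cases hAB : A ≤ B
    · exact Or.inl hAB
    · right
      obtain ⟨a, haA, haB⟩ := Set.not_subset.mp hAB
      intro b hbB
      rcases comp (a : M) (b : M) a.2 b.2 with ⟨t, ht⟩ | ⟨t, ht⟩
      · exfalso
        have : a = t • b := Subtype.ext (by rw [Submodule.coe_smul, ht])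
        exact haB (this ▸ B.smul_mem t hbB)
      · have : b = t • a := Subtype.ext (by rw [Submodule.coe_smul, ht])
        exact this ▸ A.smul_mem t haA
end

section
/- Let R be a valuation domain whose maximal ideal P is principal, generated by p. Let Λ be an index set and U a pure uniserial submodule of R^Λ with U^♯ = P. Then U is cyclic, U = Ru for some u ∈ U \ pU, and U is a direct summand of R^Λ. -/
open Pointwise

/-- if the maximal ideal `P = Rp` is principal and `U` is a pure uniserial
submodule of `R^Λ` with `U^♯ = P`, then `U = Ru` for some `u ∈ U \ pU` and `U` is a
summand of `R^Λ`. -/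
theorem stmt_2 {R : Type u} [CommRing R] [IsDomain R] [ValuationRing R]
    (P : Ideal R) (hP : P.IsMaximal) (p : R) (hp : P = Ideal.span {p})
    (Λ : Type u) (U : Submodule R (Λ → R))
    (hpure : IsPureSub R U) (huni : IsUniserialSub R U)
    (hsharp : ∀ s : R, s • U ≠ U ↔ s ∈ P) :
    (∃ u : Λ → R, u ∈ U ∧ u ∉ p • U ∧ U = Submodule.span R {u}) ∧ IsSummand R U := by
  classical
  have hmem_smul : ∀ (a : R) (x : Λ → R), x ∈ a • U ↔ ∃ y ∈ U, a • y = x := fun a x => by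
    rw [← SetLike.mem_coe, Submodule.coe_pointwise_smul, Set.mem_smul_set]; simp
  have hPm : P = IsLocalRing.maximalIdeal R := IsLocalRing.eq_maximalIdeal hP
  have hunit_of_not : ∀ r : R, r ∉ P → IsUnit r := by
    intro r hr
    by_contra hru
    exact hr (hPm ▸ hru)
  have hpP : p ∈ P := hp ▸ Ideal.mem_span_singleton_self p
  have hne : p • U ≠ U := (hsharp p).mpr hpP
  have hle : p • U ≤ U := by
    intro x hx
    rw [hmem_smul] at hx
    obtain ⟨y, hy, rfl⟩ := hx
    exact U.smul_mem p hy
  obtain ⟨u, hu, hupu⟩ : ∃ u, u ∈ U ∧ u ∉ p • U := by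
    by_contra h
    push_neg at h
    exact hne (le_antisymm hle h)
  have hcyc : U = Submodule.span R {u} := by
    refine le_antisymm ?_ (Submodule.span_le.mpr (by simpa using hu))
    intro x hx
    rcases huni (Submodule.span R {(⟨x, hx⟩ : U)}) (Submodule.span R {(⟨u, hu⟩ : U)})
      with h | h
    · have hx2 := h (Submodule.mem_span_singleton_self _)
      rw [Submodule.mem_span_singleton] at hx2
      obtain ⟨r, hr⟩ := hx2
      rw [Submodule.mem_span_singleton]
      exact ⟨r, congrArg Subtype.val hr⟩
    · have hu2 := h (Submodule.mem_span_singleton_self _)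
      rw [Submodule.mem_span_singleton] at hu2
      obtain ⟨r, hr⟩ := hu2
      have hru : r • x = u := congrArg Subtype.val hr
      by_cases hunit : IsUnit r
      · rw [Submodule.mem_span_singleton]
        obtain ⟨v, rfl⟩ := hunit
        refine ⟨(↑v⁻¹ : R), ?_⟩
        rw [← hru, smul_smul]
        simp
      · exfalso
        have hrP : r ∈ P := by
          by_contra hc
          exact hunit (hunit_of_not r hc)
        rw [hp, Ideal.mem_span_singleton'] at hrP
        obtain ⟨c, hc⟩ := hrP
        apply hupu
        rw [hmem_smul]
        refine ⟨c • x, U.smul_mem c hx, ?_⟩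
        rw [smul_smul, mul_comm, hc, hru]
  obtain ⟨lam, hlam⟩ : ∃ l, IsUnit (u l) := by
    by_contra h
    push_neg at h
    have hmem : ∀ l, ∃ c : R, u l = c * p := by
      intro l
      have : u l ∈ P := by
        by_contra hc
        exact h l (hunit_of_not _ hc)
      rw [hp, Ideal.mem_span_singleton'] at this
      obtain ⟨c, hc⟩ := this
      exact ⟨c, hc.symm⟩
    choose c hc using hmem
    obtain ⟨w, hw, hwu⟩ := hpure p u hu ⟨c, by
      funext l
      simp [Pi.smul_apply, smul_eq_mul, hc l, mul_comm]⟩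
    exact hupu ((hmem_smul p u).mpr ⟨w, hw, hwu⟩)
  refine ⟨⟨u, hu, hupu, hcyc⟩, ?_⟩
  obtain ⟨w, hw⟩ : ∃ w : R, w * u lam = 1 := hlam.exists_left_inv
  refine ⟨LinearMap.ker (LinearMap.proj lam : (Λ → R) →ₗ[R] R), ?_, ?_⟩
  · rw [Submodule.disjoint_def]
    intro x hxU hxV
    have hx0 : x lam = 0 := hxV
    rw [hcyc, Submodule.mem_span_singleton] at hxU
    obtain ⟨r, rfl⟩ := hxU
    have hr : r * u lam = 0 := hx0
    have hr0 : r = 0 := by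
      rcases mul_eq_zero.mp hr with h0 | h0
      · exact h0
      · exact absurd h0 hlam.ne_zero
    rw [hr0, zero_smul]
  · rw [codisjoint_iff, eq_top_iff]
    intro x _
    rw [Submodule.mem_sup]
    refine ⟨(x lam * w) • u, U.smul_mem _ hu, x - (x lam * w) • u, ?_, by abel⟩
    show (x - (x lam * w) • u) lam = 0
    simp only [Pi.sub_apply, Pi.smul_apply, smul_eq_mul]
    rw [mul_assoc, hw, mul_one, sub_self]
end

section
/- Let R be a valuation domain with maximal ideal P and let J = ⋂_{n∈ℕ} P^n. If the localization R_J is a maximal valuation domain, then R^Λ is a separable R-module for every index set Λ. -/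
open Pointwise

/-!
A pure submodule `U` of a torsion-free module over a valuation domain is a summand once every
coherent system of congruences `c ≡ w (mod d • U)` is solvable in `U`: by Zorn's lemma there is a
maximal partial map into `U` that extends the identity of `U` and does not decrease divisibility,
solvability lets it be extended to any further element, so it is a projection onto `U`.

In `R^Λ`, if some element of `U` has a unit coordinate then `U` is cyclic and splits off directly.
Otherwise purity makes `U` divisible by every `s ∉ J`, and a coordinate projection embeds the
uniserial `U` into an ideal `W` of `R` which is an `R_J`-module. A coherent system in `W` becomes a
system in `R_J` whose moduli are totally ordered ideals; it is solvable because `R_J` is maximal,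
the exceptional intersections `a • P_J` being impossible when no modulus is smallest.
-/

open IsLocalRing Submodule

universe u

theorem ValuationRing.of_isLocalization {R S : Type*} [CommRing R] [IsDomain R] [ValuationRing R]
    [CommRing S] [IsDomain S] [Algebra R S] (M : Submonoid R) [IsLocalization M S] :
    ValuationRing S := by
  have : PreValuationRing S := PreValuationRing.iff_ideal_total.mpr ⟨fun I₁ I₂ => by
    rw [← IsLocalization.map_under M S I₁, ← IsLocalization.map_under M S I₂]
    exact (Std.Total.total (r := (· ≤ ·)) _ _).imp Ideal.map_mono Ideal.map_mono⟩
  exact {}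

theorem IsLocalization.exists_algebraMap_eq_of_mem_map {R S : Type*} [CommRing R] [CommRing S]
    [Algebra R S] {M : Submonoid R} [IsLocalization M S] {I : Ideal R}
    (hI : ∀ m ∈ M, I ≤ m • I) {y : S} (hy : y ∈ I.map (algebraMap R S)) :
    ∃ x ∈ I, algebraMap R S x = y := by
  obtain ⟨⟨x, m⟩, hxm⟩ := (IsLocalization.mem_map_algebraMap_iff M S).mp hy
  obtain ⟨x', hx', hmx'⟩ := (mem_smul_pointwise_iff_exists _ _ _).mp (hI m m.2 x.2)
  refine ⟨x', hx', (IsLocalization.map_units S m).mul_left_cancel ?_⟩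
  rw [← map_mul, ← smul_eq_mul, hmx', ← hxm, mul_comm]

section MaximalValuationRing

variable {S : Type u} [CommRing S] [IsDomain S] [ValuationRing S]

theorem ValuationRing.dvd_of_notMem_span_singleton_mul_maximalIdeal {a b : S}
    (h : b ∉ Ideal.span {a} * maximalIdeal S) : b ∣ a := by
  obtain hba | ⟨c, rfl⟩ := ValuationRing.dvd_total b a
  · exact hba
  have hc : IsUnit c := by
    by_contra hc
    exact h (Ideal.mem_span_singleton_mul.mpr ⟨c, (mem_maximalIdeal c).mpr hc, rfl⟩)
  exact hc.mul_right_dvd.mpr dvd_rfl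

theorem ValuationRing.iInf_ne_span_singleton_mul_maximalIdeal {ι : Sort*} {B : ι → Ideal S}
    (hB : ∀ i, ∃ j, ¬ B i ≤ B j) {a : S} (ha : a ≠ 0) :
    ⨅ i, B i ≠ Ideal.span {a} * maximalIdeal S := by
  intro h
  have ha_mem : ∀ i, a ∈ B i := by
    intro i
    obtain ⟨j, hij⟩ := hB i
    obtain ⟨b, hb, hbj⟩ := Set.not_subset.mp hij
    have hbA : b ∉ Ideal.span {a} * maximalIdeal S := h ▸ fun hb' => hbj (mem_iInf B |>.mp hb' j)
    obtain ⟨c, rfl⟩ := dvd_of_notMem_span_singleton_mul_maximalIdeal hbA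
    exact Ideal.mul_mem_right c _ hb
  obtain ⟨z, hz, hza⟩ := Ideal.mem_span_singleton_mul.mp (h ▸ (mem_iInf B).mpr ha_mem)
  obtain rfl : z = 1 := mul_left_cancel₀ ha (hza.trans (mul_one a).symm)
  exact (maximalIdeal.isMaximal S).ne_top ((Ideal.eq_top_iff_one _).mpr hz)

theorem IsMaximalVD.exists_forall_sub_mem (hS : IsMaximalVD S (maximalIdeal S)) {ι : Type u}
    (a : ι → S) (B : ι → Ideal S) (hcoh : ∀ i j, B i ≤ B j → a i - a j ∈ B j) :
    ∃ c, ∀ i, c - a i ∈ B i := by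
  by_cases hmin : ∃ i₀, ∀ i, B i₀ ≤ B i
  · obtain ⟨i₀, hi₀⟩ := hmin
    exact ⟨a i₀, fun i => hcoh i₀ i (hi₀ i)⟩
  push Not at hmin
  by_cases htop : ⨅ i, B i = ⊤
  · exact ⟨0, fun i => by simp [eq_top_iff.mpr (htop ▸ iInf_le B i)]⟩
  exact hS _ htop (fun _ => ValuationRing.iInf_ne_span_singleton_mul_maximalIdeal hmin) ι a B
    (iInf_le B) hcoh rfl

end MaximalValuationRing

section CoherentSystems

variable {R M N : Type*} [CommRing R] [AddCommGroup M] [Module R M] [AddCommGroup N] [Module R N]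

def SolvesCoherentSystems (U : Submodule R M) : Prop :=
  ∀ T : Set (R × M), (∀ p ∈ T, p.2 ∈ U) → (∀ p ∈ T, ∀ q ∈ T, p.1 ∣ q.1 → q.2 - p.2 ∈ p.1 • U) →
    ∃ c ∈ U, ∀ p ∈ T, c - p.2 ∈ p.1 • U

theorem SolvesCoherentSystems.of_map {U : Submodule R M} {f : M →ₗ[R] N} (hf : Set.InjOn f U)
    (h : SolvesCoherentSystems (U.map f)) : SolvesCoherentSystems U := by
  have hsmul : ∀ (d : R) {x}, x ∈ U → (x ∈ d • U ↔ f x ∈ d • U.map f) := by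
    intro d x hx
    rw [← map_pointwise_smul]
    refine ⟨mem_map_of_mem, fun ⟨y, hy, hyx⟩ => ?_⟩
    rwa [← hf (smul_le_self_of_tower d U hy) hx hyx]
  intro T hTU hcoh
  obtain ⟨_, ⟨c, hc, rfl⟩, hsol⟩ := h (Prod.map id f '' T)
    (by rintro _ ⟨p, hp, rfl⟩; exact mem_map_of_mem (hTU p hp))
    (by
      rintro _ ⟨p, hp, rfl⟩ _ ⟨q, hq, rfl⟩ hpq
      simpa using (hsmul p.1 (U.sub_mem (hTU q hq) (hTU p hp))).mp (hcoh p hp q hq hpq))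
  refine ⟨c, hc, fun p hp => (hsmul p.1 (U.sub_mem hc (hTU p hp))).mpr ?_⟩
  simpa using hsol _ ⟨p, hp, rfl⟩

end CoherentSystems

theorem Ideal.solvesCoherentSystems_of_isMaximalVD {R : Type u} [CommRing R] [IsDomain R]
    [ValuationRing R] {J : Ideal R} [J.IsPrime]
    (hmax : IsMaximalVD (Localization.AtPrime J) (maximalIdeal (Localization.AtPrime J)))
    {W : Ideal R} (hW : ∀ s ∉ J, W ≤ s • W) : SolvesCoherentSystems W := by
  have := ValuationRing.of_isLocalization (S := Localization.AtPrime J) J.primeCompl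
  set f := algebraMap R (Localization.AtPrime J)
  have hdesc : ∀ (d : R) {y}, y ∈ (d • W).map f → ∃ x ∈ d • W, f x = y := fun d _ =>
    IsLocalization.exists_algebraMap_eq_of_mem_map (M := J.primeCompl) fun s hs => by
      rw [smul_comm]; exact smul_le_smul_left d (hW s hs)
  intro T hTW hcoh
  rcases T.eq_empty_or_nonempty with rfl | ⟨p₀, hp₀⟩
  · exact ⟨0, W.zero_mem, by simp⟩
  obtain ⟨c₀, hc₀⟩ := hmax.exists_forall_sub_mem (fun p : T => f p.1.2)
    (fun p => (p.1.1 • W).map f) <| by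
      rintro ⟨p, hp⟩ ⟨q, hq⟩ hpq
      rcases ValuationRing.dvd_total q.1 p.1 with hqp | hpq'
      · simpa using Ideal.mem_map_of_mem f (hcoh q hq p hp hqp)
      · rw [← neg_sub]
        exact neg_mem (hpq (by simpa using Ideal.mem_map_of_mem f (hcoh p hp q hq hpq')))
  obtain ⟨x₀, hx₀, hfx₀⟩ := hdesc _ (hc₀ ⟨p₀, hp₀⟩)
  refine ⟨x₀ + p₀.2, W.add_mem (smul_le_self_of_tower _ _ hx₀) (hTW p₀ hp₀), fun p hp => ?_⟩
  obtain ⟨x, hx, hfx⟩ := hdesc _ (hc₀ ⟨p, hp⟩)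
  convert hx using 1
  apply IsLocalization.injective (Localization.AtPrime J) J.primeCompl_le_nonZeroDivisors
  rw [hfx, map_sub, map_add, hfx₀]
  ring

section PartialProjections

variable {R M : Type*} [CommRing R] [AddCommGroup M] [Module R M] {U : Submodule R M}
  {G : Submodule R (M × M)}

/-- `G` is the graph of a partial map into `U` that does not decrease divisibility. -/
def PreservesDivisibility (U : Submodule R M) (G : Submodule R (M × M)) : Prop :=
  ∀ p ∈ G, ∀ s : R, (∃ m, s • m = p.1) → p.2 ∈ s • U

theorem PreservesDivisibility.snd_mem (hG : PreservesDivisibility U G) {p : M × M} (hp : p ∈ G) :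
    p.2 ∈ U := by
  simpa using hG p hp 1 ⟨p.1, one_smul R _⟩

theorem PreservesDivisibility.snd_eq_zero (hG : PreservesDivisibility U G) {p : M × M}
    (hp : p ∈ G) (h0 : p.1 = 0) : p.2 = 0 := by
  obtain ⟨z, -, hz⟩ := (mem_smul_pointwise_iff_exists _ _ _).mp (hG p hp 0 ⟨0, by simp [h0]⟩)
  simpa using hz.symm

theorem PreservesDivisibility.sSup {𝒢 : Set (Submodule R (M × M))} (hne : 𝒢.Nonempty)
    (hdir : DirectedOn (· ≤ ·) 𝒢) (h : ∀ G ∈ 𝒢, PreservesDivisibility U G) :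
    PreservesDivisibility U (sSup 𝒢) := by
  intro p hp
  obtain ⟨G, hG, hpG⟩ := (mem_sSup_of_directed hne hdir).mp hp
  exact h G hG p hpG

theorem PreservesDivisibility.isSummand (hG : PreservesDivisibility U G)
    (hdiag : ∀ u ∈ U, (u, u) ∈ G) (htot : ∀ x, ∃ y, (x, y) ∈ G) : IsSummand R U := by
  have hfun : ∀ p ∈ G, p.1 = 0 → p.2 = 0 := fun p hp => hG.snd_eq_zero hp
  have hdom : G.toLinearPMap.domain = ⊤ :=
    eq_top_iff.mpr fun x _ => ⟨_, (htot x).choose_spec, rfl⟩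
  set f : M →ₗ[R] M := G.toLinearPMap.toFun ∘ₗ (LinearEquiv.ofTop _ hdom).symm.toLinearMap
  have hf : ∀ x, (x, f x) ∈ G := fun x =>
    mem_graph_toLinearPMap hfun ((LinearEquiv.ofTop _ hdom).symm x)
  refine ⟨_, LinearMap.isCompl_of_proj (f := f.codRestrict U fun x => hG.snd_mem (hf x))
    fun u => Subtype.ext ?_⟩
  simpa [sub_eq_zero] using hfun _ (G.sub_mem (hf u) (hdiag u u.2)) (sub_self _)

/-- `(d, w)` belongs to `extensionSystem G x` when some `g + r • (x, c)` with `g ∈ G`, `r ≠ 0`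
has first coordinate in `(r * d) • M`; its second coordinate `r • (c - w)` then has to lie in
`(r * d) • U`. -/
def extensionSystem (G : Submodule R (M × M)) (x : M) : Set (R × M) :=
  {q | ∃ r ≠ 0, ∃ g ∈ G, (∃ m, (r * q.1) • m = r • x + g.1) ∧ g.2 + r • q.2 = 0}

theorem PreservesDivisibility.snd_mem_smul (hG : PreservesDivisibility U G) {g : M × M}
    (hg : g ∈ G) {r d : R} {m x : M} (h : (r * d) • m = r • x + g.1) : g.2 ∈ r • U :=
  hG g hg _ ⟨d • m - x, by rw [smul_sub, smul_smul, h, add_sub_cancel_left]⟩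

end PartialProjections

section Extension

variable {R M : Type*} [CommRing R] [IsDomain R] [AddCommGroup M] [Module R M]
  [Module.IsTorsionFree R M] {U : Submodule R M} {G : Submodule R (M × M)}

theorem PreservesDivisibility.snd_mem_of_mem_extensionSystem (hG : PreservesDivisibility U G)
    {x : M} {q : R × M} (hq : q ∈ extensionSystem G x) : q.2 ∈ U := by
  obtain ⟨r, hr, g, hg, ⟨m, hm⟩, hgq⟩ := hq
  obtain ⟨z, hz, hzg⟩ := (mem_smul_pointwise_iff_exists _ _ _).mp (hG.snd_mem_smul hg hm)
  have : q.2 = -z := smul_right_injective M hr <| show r • q.2 = r • -z by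
    rw [smul_neg, hzg]; exact eq_neg_of_add_eq_zero_right hgq
  exact this ▸ U.neg_mem hz

theorem PreservesDivisibility.sub_mem_of_mem_extensionSystem (hG : PreservesDivisibility U G)
    {x : M} {p q : R × M} (hp : p ∈ extensionSystem G x) (hq : q ∈ extensionSystem G x)
    (hpq : p.1 ∣ q.1) : q.2 - p.2 ∈ p.1 • U := by
  obtain ⟨d, w⟩ := p
  obtain ⟨d', w'⟩ := q
  obtain ⟨r, hr, g, hg, ⟨m, hm⟩, hw⟩ := hp
  obtain ⟨r', hr', g', hg', ⟨m', hm'⟩, hw'⟩ := hq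
  obtain ⟨e, rfl⟩ := hpq
  have hfst : (r * r' * d) • (m - e • m') = (r' • g - r • g').1 := by
    simp only [Prod.fst_sub, Prod.smul_fst]
    linear_combination (norm := module) r' • hm - r • hm'
  obtain ⟨z, hz, hzh⟩ := (mem_smul_pointwise_iff_exists _ _ _).mp
    (hG _ (G.sub_mem (G.smul_mem r' hg) (G.smul_mem r hg')) _ ⟨_, hfst⟩)
  refine (mem_smul_pointwise_iff_exists _ _ _).mpr
    ⟨z, hz, smul_right_injective M (mul_ne_zero hr hr') ?_⟩
  simp only [Prod.snd_sub, Prod.smul_snd] at hzh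
  show (r * r') • (d • z) = (r * r') • (w' - w)
  linear_combination (norm := module) hzh + r' • hw - r • hw'

theorem PreservesDivisibility.exists_sup_span [ValuationRing R] (hU : SolvesCoherentSystems U)
    (hG : PreservesDivisibility U G) (x : M) :
    ∃ c, PreservesDivisibility U (G ⊔ R ∙ (x, c)) := by
  obtain ⟨c, hcU, hc⟩ := hU (extensionSystem G x) (fun _ => hG.snd_mem_of_mem_extensionSystem)
    fun _ hp _ hq => hG.sub_mem_of_mem_extensionSystem hp hq
  refine ⟨c, fun p hp s ⟨m, hm⟩ => ?_⟩
  obtain ⟨g, hg, _, ht, rfl⟩ := Submodule.mem_sup.mp hp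
  obtain ⟨t, rfl⟩ := mem_span_singleton.mp ht
  simp only [Prod.fst_add, Prod.smul_fst, Prod.snd_add, Prod.smul_snd] at hm ⊢
  by_cases hst : s ∣ t
  · obtain ⟨e, rfl⟩ := hst
    have hg₁ : s • (m - e • x) = g.1 := by rw [smul_sub, hm, mul_smul]; abel
    refine add_mem (hG g hg s ⟨_, hg₁⟩) ?_
    rw [mul_smul]
    exact smul_mem_pointwise_smul _ _ _ (U.smul_mem e hcU)
  obtain ⟨d, rfl⟩ := (ValuationRing.dvd_total s t).resolve_left hst
  have ht : t ≠ 0 := by rintro rfl; exact hst (dvd_zero _)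
  have hm' : (t * d) • m = t • x + g.1 := hm.trans (add_comm _ _)
  obtain ⟨z, -, hzg⟩ := (mem_smul_pointwise_iff_exists _ _ _).mp (hG.snd_mem_smul hg hm')
  obtain ⟨y, hy, hyc⟩ := (mem_smul_pointwise_iff_exists _ _ _).mp
    (hc (d, -z) ⟨t, ht, g, hg, ⟨m, hm'⟩, by rw [smul_neg, hzg, add_neg_cancel]⟩)
  refine (mem_smul_pointwise_iff_exists _ _ _).mpr ⟨y, hy, ?_⟩
  rw [mul_smul, hyc, ← hzg]
  module

theorem IsPureSub.isSummand_of_solvesCoherentSystems [ValuationRing R] (hpure : IsPureSub R U)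
    (hU : SolvesCoherentSystems U) : IsSummand R U := by
  set Δ : Submodule R (M × M) := U.map (LinearMap.id.prod LinearMap.id)
  have hΔ : PreservesDivisibility U Δ := by
    rintro _ ⟨u, hu, rfl⟩ s hs
    exact (mem_smul_pointwise_iff_exists _ _ _).mpr (hpure s u hu hs)
  obtain ⟨G, hΔG, hG⟩ := zorn_le_nonempty₀ {G | PreservesDivisibility U G}
    (fun 𝒢 h𝒢 hchain G hG => ⟨sSup 𝒢, .sSup ⟨G, hG⟩ hchain.directedOn h𝒢, fun _ => le_sSup⟩) Δ hΔ
  refine hG.prop.isSummand (fun u hu => hΔG ⟨u, hu, rfl⟩) fun x => ?_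
  obtain ⟨c, hc⟩ := hG.prop.exists_sup_span hU x
  exact ⟨c, hG.eq_of_ge hc le_sup_left ▸ mem_sup_right (mem_span_singleton_self _)⟩

end Extension

theorem ValuationRing.dvd_of_notMem_maximalIdeal_sq {R : Type*} [CommRing R] [IsDomain R]
    [ValuationRing R] {t x : R} (ht : t ∉ maximalIdeal R ^ 2) (hx : x ∈ maximalIdeal R) :
    t ∣ x := by
  obtain htx | ⟨y, rfl⟩ := ValuationRing.dvd_total t x
  · exact htx
  have hy : IsUnit y := by
    by_contra hy
    exact ht (sq (maximalIdeal R) ▸ Ideal.mul_mem_mul hx ((mem_maximalIdeal y).mpr hy))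
  exact hy.mul_right_dvd.mpr dvd_rfl

theorem IsLocalRing.exists_notMem_maximalIdeal_sq {R : Type*} [CommRing R] [IsLocalRing R]
    {s : R} (hs : s ∉ ⨅ n : ℕ, maximalIdeal R ^ n) (hsu : ¬ IsUnit s) :
    ∃ t ∈ maximalIdeal R, t ∉ maximalIdeal R ^ 2 := by
  by_contra! h
  have hpow : ∀ n, maximalIdeal R ≤ maximalIdeal R ^ n := by
    intro n
    induction n with
    | zero => simp
    | succ n ih =>
      calc maximalIdeal R ≤ maximalIdeal R ^ 2 := h
        _ ≤ maximalIdeal R ^ n * maximalIdeal R := by rw [sq]; exact Ideal.mul_mono_left ih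
        _ = maximalIdeal R ^ (n + 1) := (pow_succ _ n).symm
  exact hs (mem_iInf _ |>.mpr fun n => hpow n ((mem_maximalIdeal s).mpr hsu))

section Product

theorem IsUniserialSub.mem_span_singleton_or {R M : Type*} [CommRing R] [AddCommGroup M]
    [Module R M] {U : Submodule R M} (hU : IsUniserialSub R U) {u v : M} (hu : u ∈ U) (hv : v ∈ U) :
    u ∈ R ∙ v ∨ v ∈ R ∙ u := by
  have hle : ∀ {x y : M} (hx : x ∈ U) (hy : y ∈ U),
      R ∙ (⟨x, hx⟩ : U) ≤ R ∙ ⟨y, hy⟩ → x ∈ R ∙ y := fun hx hy h => by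
    obtain ⟨a, ha⟩ := mem_span_singleton.mp ((span_singleton_le_iff_mem _ _).mp h)
    exact mem_span_singleton.mpr ⟨a, congrArg Subtype.val ha⟩
  exact (hU _ _).imp (hle hu hv) (hle hv hu)

variable {R : Type*} [CommRing R] {Λ : Type*} {U : Submodule R (Λ → R)}

theorem IsUniserialSub.isSummand_of_isUnit_apply (hU : IsUniserialSub R U) {u₀ : Λ → R}
    (hu₀ : u₀ ∈ U) {l : Λ} (hl : IsUnit (u₀ l)) : IsSummand R U := by
  have hspan : ∀ u ∈ U, ∃ a : R, a • u₀ = u := by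
    intro u hu
    rcases hU.mem_span_singleton_or hu hu₀ with h | h
    · exact mem_span_singleton.mp h
    obtain ⟨a, rfl⟩ := mem_span_singleton.mp h
    have ha : IsUnit a := isUnit_of_mul_isUnit_left hl
    exact ⟨↑ha.unit⁻¹, by simp [smul_smul]⟩
  obtain ⟨v, hv⟩ := hl.exists_left_inv
  set π : (Λ → R) →ₗ[R] U := LinearMap.toSpanSingleton R U ⟨u₀, hu₀⟩ ∘ₗ (v • LinearMap.proj l)
  refine ⟨_, LinearMap.isCompl_of_proj (f := π) fun ⟨u, hu⟩ => ?_⟩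
  obtain ⟨a, rfl⟩ := hspan u hu
  ext1
  simp [π, hv]

theorem IsUniserialSub.exists_injOn [IsDomain R] (hU : IsUniserialSub R U) :
    ∃ f : (Λ → R) →ₗ[R] R, Set.InjOn f U := by
  rcases eq_or_ne U ⊥ with rfl | hbot
  · exact ⟨0, by simp⟩
  obtain ⟨u₁, hu₁, hu₁0⟩ := exists_mem_ne_zero_of_ne_bot hbot
  obtain ⟨l, hl⟩ := Function.ne_iff.mp hu₁0
  refine ⟨LinearMap.proj l, LinearMap.injOn_of_disjoint_ker subset_rfl
    (LinearMap.disjoint_ker.mpr fun w hw hwl => ?_)⟩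
  rcases hU.mem_span_singleton_or hw hu₁ with h | h
  · obtain ⟨a, rfl⟩ := mem_span_singleton.mp h
    have ha : a = 0 := (mul_eq_zero.mp (by simpa using hwl)).resolve_right hl
    simp [ha]
  · obtain ⟨a, rfl⟩ := mem_span_singleton.mp h
    exact absurd (by simpa using congrArg (a * ·) hwl) hl

theorem IsPureSub.le_smul_of_notMem_iInf_pow [IsDomain R] [ValuationRing R] (hU : IsPureSub R U)
    (hP : ∀ u ∈ U, ∀ l, u l ∈ maximalIdeal R) {s : R}
    (hs : s ∉ ⨅ n : ℕ, maximalIdeal R ^ n) : U ≤ s • U := by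
  by_cases hsu : IsUnit s
  · intro u hu
    exact (mem_smul_pointwise_iff_exists _ _ _).mpr
      ⟨↑hsu.unit⁻¹ • u, U.smul_mem _ hu, by simp [smul_smul]⟩
  obtain ⟨t, htP, ht⟩ := exists_notMem_maximalIdeal_sq hs hsu
  obtain ⟨n, hn⟩ : ∃ n, s ∉ maximalIdeal R ^ n := by simpa [mem_iInf] using hs
  have htU : U ≤ t • U := by
    intro u hu
    choose m hm using fun l => ValuationRing.dvd_of_notMem_maximalIdeal_sq ht (hP u hu l)
    exact (mem_smul_pointwise_iff_exists _ _ _).mpr (hU t u hu ⟨m, funext fun l => (hm l).symm⟩)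
  have htnU : ∀ k : ℕ, U ≤ t ^ k • U := by
    intro k
    induction k with
    | zero => simp
    | succ k ih => rw [pow_succ, mul_smul]; exact ih.trans (smul_le_smul_left _ htU)
  obtain ⟨e, he⟩ := (ValuationRing.dvd_total s (t ^ n)).resolve_right fun ⟨e, he⟩ =>
    hn (he ▸ Ideal.mul_mem_right e _ (Ideal.pow_mem_pow htP n))
  calc U ≤ t ^ n • U := htnU n
    _ = s • e • U := by rw [he, mul_smul]
    _ ≤ s • U := smul_le_smul_left s (smul_le_self_of_tower e U)

end Product

/-- if `J = ⋂ₙ Pⁿ` and `R_J` is a maximal valuation domain, then `R^Λ` is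
separable for every index set `Λ`. -/
theorem stmt_3 {R : Type u} [CommRing R] [IsDomain R] [ValuationRing R]
    (P : Ideal R) (hP : P.IsMaximal) (J : Ideal R) (hJ : J = ⨅ n : ℕ, P ^ n) [J.IsPrime]
    (hmax : IsMaximalVD (Localization.AtPrime J)
      (IsLocalRing.maximalIdeal (Localization.AtPrime J))) :
    ∀ Λ : Type u, IsSeparableMod R (Λ → R) := by
  intro Λ U hpure huni
  obtain rfl := IsLocalRing.eq_maximalIdeal hP
  by_cases hunit : ∃ u ∈ U, ∃ l, IsUnit (u l)
  · obtain ⟨u, hu, l, hl⟩ := hunit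
    exact huni.isSummand_of_isUnit_apply hu hl
  push Not at hunit
  have hdiv : ∀ s ∉ J, U ≤ s • U := fun s hs => hpure.le_smul_of_notMem_iInf_pow
    (fun u hu l => (mem_maximalIdeal _).mpr (hunit u hu l)) (hJ ▸ hs)
  obtain ⟨f, hf⟩ := huni.exists_injOn
  refine hpure.isSummand_of_solvesCoherentSystems (.of_map hf
    (Ideal.solvesCoherentSystems_of_isMaximalVD hmax fun s hs => ?_))
  rw [← map_pointwise_smul]
  exact map_mono (hdiv s hs)
end

section
/- Let R be a valuation domain, Λ an index set, and L a prime ideal of R. If R^Λ is a separable R-module, then (R_L)^Λ is a separable R_L-module. -/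
open Pointwise

/-!
Write `S = R_L` and `φ : R^Λ → S^Λ`. For a pure uniserial `U ≤ S^Λ`, the contraction
`W = φ⁻¹ U` is pure and uniserial (elements of `S` are fractions `a / t` and divisibility in `R`
is total), so `R^Λ = W ⊕ V`, and the complement of `U` is the set of `y` having a nonzero
multiple in `φ V`. If `L = 0`, `S` is a field. Otherwise fix `0 ≠ l ∈ L`: every `t ∉ L` divides
`l`, so `l y = φ m` with `m ∈ R^Λ`. The coordinates of `m` lie in `I = R ∩ l S`, which is an
intersection of principal ideals and hence preserved coordinatewise by every endomorphism of
`R^Λ`, in particular by the projection onto `W`. So the `W`-component `w` of `m` has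
`φ w ∈ l S^Λ ∩ U = l U`, and `y = u + (y - u)` with `l u = φ w` is the required splitting.
-/
section Uniserial

variable {R M : Type*} [CommRing R] [AddCommGroup M] [Module R M]

theorem isUniserialSub_iff {U : Submodule R M} :
    IsUniserialSub R U ↔ ∀ x ∈ U, ∀ y ∈ U, x ∈ R ∙ y ∨ y ∈ R ∙ x := by
  simp only [Submodule.mem_span_singleton]
  constructor
  · intro hU x hx y hy
    refine (hU (R ∙ ⟨x, hx⟩) (R ∙ ⟨y, hy⟩)).imp (fun hle => ?_) (fun hle => ?_) <;>
    · obtain ⟨c, hc⟩ := Submodule.mem_span_singleton.mp (hle (Submodule.mem_span_singleton_self _))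
      exact ⟨c, congrArg Subtype.val hc⟩
  · intro hU A B
    refine or_iff_not_imp_left.mpr fun hAB => ?_
    obtain ⟨a, haA, haB⟩ := SetLike.not_le_iff_exists.mp hAB
    intro b hbB
    rcases hU a a.2 b b.2 with ⟨c, hc⟩ | ⟨c, hc⟩
    · exact absurd ((Subtype.ext hc : c • b = a) ▸ B.smul_mem c hbB) haB
    · exact (Subtype.ext hc : c • a = b) ▸ A.smul_mem c haA

end Uniserial

theorem ValuationRing.mem_span_singleton_or_of_smul_eq {R M : Type*} [CommRing R] [IsDomain R]
    [ValuationRing R] [AddCommGroup M] [Module R M] [Module.IsTorsionFree R M]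
    {a t : R} {x y : M} (ht : t ≠ 0) (h : a • y = t • x) : x ∈ R ∙ y ∨ y ∈ R ∙ x := by
  simp only [Submodule.mem_span_singleton]
  rcases ValuationRing.dvd_total t a with ⟨e, rfl⟩ | ⟨e, rfl⟩
  · exact Or.inl ⟨e, (smul_right_inj ht).mp (by rw [← h, mul_smul])⟩
  · rcases eq_or_ne a 0 with rfl | ha
    · rw [zero_smul, eq_comm, smul_eq_zero] at h
      exact Or.inl ⟨0, by rw [zero_smul, h.resolve_left ht]⟩
    · exact Or.inr ⟨e, (smul_right_inj ha).mp (by rw [h, mul_smul])⟩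

section Comap

variable {R S M N : Type*} [CommRing R] [CommRing S] [Algebra R S]
  [AddCommGroup M] [Module R M] [AddCommGroup N] [Module R N] [Module S N] [IsScalarTower R S N]

theorem IsPureSub.comap [IsDomain R] [Module.IsTorsionFree R N] (φ : M →ₗ[R] N)
    {U : Submodule S N} (hU : IsPureSub S U) : IsPureSub R ((U.restrictScalars R).comap φ) := by
  rintro r x hx ⟨m, rfl⟩
  rcases eq_or_ne r 0 with rfl | hr
  · exact ⟨0, Submodule.zero_mem _, by simp⟩
  obtain ⟨u, hu, hru⟩ := hU (algebraMap R S r) (φ (r • m)) hx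
    ⟨φ m, by rw [algebraMap_smul, map_smul]⟩
  rw [algebraMap_smul, map_smul, smul_right_inj hr] at hru
  exact ⟨m, show φ m ∈ U from hru ▸ hu, rfl⟩

theorem IsUniserialSub.comap [IsDomain R] [ValuationRing R] [Module.IsTorsionFree R M]
    (T : Submonoid R) [IsLocalization T S] (hT : T ≤ nonZeroDivisors R)
    {φ : M →ₗ[R] N} (hφ : Function.Injective φ) {U : Submodule S N} (hU : IsUniserialSub S U) :
    IsUniserialSub R ((U.restrictScalars R).comap φ) := by
  have key (x y : M) (hxy : φ x ∈ S ∙ φ y) : x ∈ R ∙ y ∨ y ∈ R ∙ x := by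
    obtain ⟨σ, hσ⟩ := Submodule.mem_span_singleton.mp hxy
    obtain ⟨⟨a, t⟩, hat⟩ := IsLocalization.surj T σ
    refine ValuationRing.mem_span_singleton_or_of_smul_eq (a := a)
      (nonZeroDivisors.ne_zero (hT t.2)) (hφ ?_)
    rw [map_smul, map_smul, ← hσ, ← algebraMap_smul S a, ← hat, mul_comm σ, mul_smul,
      algebraMap_smul]
  rw [isUniserialSub_iff] at hU ⊢
  intro x hx y hy
  exact (hU _ hx _ hy).elim (key x y) (fun h => (key y x h).symm)

end Comap

section Saturation

variable {R S M N : Type*} [CommRing R] [IsDomain R] [CommRing S] [Algebra R S]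
  [AddCommGroup M] [Module R M] [AddCommGroup N] [Module R N] [Module S N] [IsScalarTower R S N]

-- `span S (V.map φ)` would be too small: for infinite `Λ` the multiples needed are unbounded.
variable (S) in
def Submodule.saturation (T : Submonoid R) [IsLocalization T S] (hT : T ≤ nonZeroDivisors R)
    (P : Submodule R N) : Submodule S N where
  carrier := {y | ∃ r : R, r ≠ 0 ∧ r • y ∈ P}
  zero_mem' := ⟨1, one_ne_zero, by simp⟩
  add_mem' := by
    rintro y z ⟨r, hr, hy⟩ ⟨r', hr', hz⟩
    refine ⟨r' * r, mul_ne_zero hr' hr, ?_⟩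
    rw [smul_add, mul_smul, mul_comm, mul_smul]
    exact P.add_mem (P.smul_mem r' hy) (P.smul_mem r hz)
  smul_mem' := by
    rintro σ y ⟨r, hr, hy⟩
    obtain ⟨⟨a, t⟩, hat⟩ := IsLocalization.surj T σ
    refine ⟨t * r, mul_ne_zero (nonZeroDivisors.ne_zero (hT t.2)) hr, ?_⟩
    have : (t * r) • σ • y = a • r • y := by
      rw [← algebraMap_smul S (t * r), ← algebraMap_smul S a, ← algebraMap_smul S r, smul_smul,
        smul_smul, map_mul, ← hat]
      ring_nf
    rw [this]
    exact P.smul_mem a hy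

theorem disjoint_saturation_map [Module.IsTorsionFree R N] {T : Submonoid R} [IsLocalization T S]
    (hT : T ≤ nonZeroDivisors R) {φ : M →ₗ[R] N} {U : Submodule S N} {V : Submodule R M}
    (hV : Disjoint ((U.restrictScalars R).comap φ) V) :
    Disjoint U (Submodule.saturation S T hT (V.map φ)) := by
  rw [Submodule.disjoint_def] at hV ⊢
  rintro y hyU ⟨r, hr, v, hv, hvy⟩
  have hvU : φ v ∈ U := by
    rw [hvy, ← algebraMap_smul S]
    exact U.smul_mem _ hyU
  rw [hV v hvU hv, map_zero, eq_comm, smul_eq_zero] at hvy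
  exact hvy.resolve_left hr

end Saturation

section ValuationRing

variable {R S : Type*} [CommRing R] [IsDomain R] [ValuationRing R] [CommRing S] [Algebra R S]

theorem IsLocalization.AtPrime.exists_algebraMap_eq_mul {L : Ideal R} [L.IsPrime]
    [IsLocalization.AtPrime S L] {l : R} (hl : l ∈ L) (s : S) :
    ∃ r : R, algebraMap R S r = algebraMap R S l * s := by
  obtain ⟨⟨a, t⟩, hat⟩ := IsLocalization.surj L.primeCompl s
  obtain ⟨d, rfl⟩ : (t : R) ∣ l := (ValuationRing.dvd_total (t : R) l).resolve_right
    fun hlt => t.2 (L.mem_of_dvd hlt hl)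
  exact ⟨d * a, by rw [map_mul, map_mul, ← hat]; ring⟩

theorem IsLocalization.AtPrime.exists_le_span_singleton_notMem (L : Ideal R) [L.IsPrime]
    [IsLocalization.AtPrime S L] (l : R) {c : R}
    (hc : c ∉ (Ideal.span {algebraMap R S l}).comap (algebraMap R S)) :
    ∃ b : R, (Ideal.span {algebraMap R S l}).comap (algebraMap R S) ≤ Ideal.span {b} ∧
      c ∉ Ideal.span {b} := by
  set I := (Ideal.span {algebraMap R S l}).comap (algebraMap R S)
  have hunit (x : R) (hx : x ∉ L) : IsUnit (algebraMap R S x) :=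
    IsLocalization.map_units S (⟨x, hx⟩ : L.primeCompl)
  by_cases hmax : ∃ x ∉ L, ¬IsUnit x
  · obtain ⟨x, hxL, hx⟩ := hmax
    have hc0 : c ≠ 0 := fun h => hc (h ▸ I.zero_mem)
    refine ⟨c * x, fun r hr => ?_, fun hcx => hx ?_⟩
    · refine Ideal.mem_span_singleton.mpr <|
        (ValuationRing.dvd_total (c * x) r).resolve_right fun hrc => hc ?_
      have hcx : algebraMap R S l ∣ algebraMap R S c * algebraMap R S x := by
        rw [← map_mul]; exact Ideal.mem_span_singleton.mp (I.mem_of_dvd hrc hr)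
      exact Ideal.mem_span_singleton.mpr ((hunit x hxL).dvd_mul_right.mp hcx)
    · exact isUnit_of_dvd_one
        ((mul_dvd_mul_iff_left hc0).mp (by simpa using Ideal.mem_span_singleton.mp hcx))
  · push Not at hmax
    refine ⟨l, fun r hr => Ideal.mem_span_singleton.mpr ?_,
      fun hlc => hc (Ideal.mem_span_singleton.mpr (map_dvd _ (Ideal.mem_span_singleton.mp hlc)))⟩
    obtain ⟨s, hs⟩ := Ideal.mem_span_singleton.mp hr
    obtain ⟨⟨a, t⟩, hat⟩ := IsLocalization.surj L.primeCompl s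
    have : r * t = l * a := IsLocalization.injective S L.primeCompl_le_nonZeroDivisors
      (by rw [map_mul, map_mul, hs, ← hat]; ring)
    exact (hmax t t.2).dvd_mul_right.mp ⟨a, this⟩

end ValuationRing

theorem LinearMap.apply_mem_of_forall_mem {R Λ : Type*} [CommRing R] {I : Ideal R}
    (hI : ∀ c ∉ I, ∃ b, I ≤ Ideal.span {b} ∧ c ∉ Ideal.span {b})
    (π : (Λ → R) →ₗ[R] Λ → R) {m : Λ → R} (hm : ∀ i, m i ∈ I) (i : Λ) : π m i ∈ I := by
  by_contra hc
  obtain ⟨b, hIb, hcb⟩ := hI _ hc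
  choose n hn using fun j => Ideal.mem_span_singleton'.mp (hIb (hm j))
  have hmn : m = b • n := funext fun j => by simp [← hn j, mul_comm]
  exact hcb (Ideal.mem_span_singleton'.mpr ⟨π n i, by simp [hmn, mul_comm]⟩)

theorem isCompl_saturation_map {R S Λ : Type*} [CommRing R] [IsDomain R] [ValuationRing R]
    [CommRing S] [Algebra R S] {L : Ideal R} [L.IsPrime] [IsLocalization.AtPrime S L]
    (hL : L ≠ ⊥) {U : Submodule S (Λ → S)} (hU : IsPureSub S U) {V : Submodule R (Λ → R)}
    (hV : IsCompl ((U.restrictScalars R).comap ((Algebra.linearMap R S).compLeft Λ)) V) :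
    IsCompl U (Submodule.saturation S L.primeCompl L.primeCompl_le_nonZeroDivisors
      (V.map ((Algebra.linearMap R S).compLeft Λ))) := by
  have : Module.IsTorsionFree R S := by
    have := IsLocalization.flat S L.primeCompl
    infer_instance
  refine ⟨disjoint_saturation_map _ hV.disjoint,
    Submodule.codisjoint_iff_exists_add_eq.mpr fun y => ?_⟩
  obtain ⟨l, hlL, hl0⟩ := (Submodule.ne_bot_iff L).mp hL
  choose m hm using fun i => IsLocalization.AtPrime.exists_algebraMap_eq_mul hlL (y i)
  have hw := LinearMap.apply_mem_of_forall_mem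
    (fun _ => IsLocalization.AtPrime.exists_le_span_singleton_notMem (S := S) L l)
    (Submodule.projection _ V hV) (m := m)
    (fun i => Ideal.mem_comap.mpr (Ideal.mem_span_singleton'.mpr ⟨y i, by rw [hm, mul_comm]⟩))
  have hwU := Submodule.projection_apply_mem hV m
  have hmw := Submodule.sub_projection_mem hV m
  generalize Submodule.projection _ V hV m = w at hw hwU hmw
  choose z hz using fun i => Ideal.mem_span_singleton'.mp (Ideal.mem_comap.mp (hw i))
  obtain ⟨u, hu, hlu⟩ := hU (algebraMap R S l) _ hwU
    ⟨z, funext fun i => by simp [← hz i, mul_comm]⟩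
  refine ⟨u, y - u, hu, ⟨l, hl0, m - w, hmw, funext fun i => ?_⟩, add_sub_cancel _ _⟩
  have hlu_i : algebraMap R S l * u i = algebraMap R S (w i) := by simpa using congrFun hlu i
  simp [hm, ← hlu_i, Algebra.smul_def, mul_sub]

theorem isSeparableMod_of_isField {K M : Type*} [CommRing K] (hK : IsField K) [AddCommGroup M]
    [Module K M] : IsSeparableMod K M := by
  let := hK.toField
  exact fun U _ _ => U.exists_isCompl

/-- if `R^Λ` is a separable `R`-module then `(R_L)^Λ` is a separable
`R_L`-module, for every prime `L`. -/
theorem stmt_6 {R : Type u} [CommRing R] [IsDomain R] [ValuationRing R]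
    (Λ : Type u) (L : Ideal R) [L.IsPrime]
    (h : IsSeparableMod R (Λ → R)) :
    IsSeparableMod (Localization.AtPrime L) (Λ → Localization.AtPrime L) := by
  rcases eq_or_ne L ⊥ with rfl | hL
  · have : IsFractionRing R (Localization.AtPrime (⊥ : Ideal R)) := by
      simpa [Ideal.primeCompl_bot] using Localization.isLocalization (M := (⊥ : Ideal R).primeCompl)
    exact isSeparableMod_of_isField (IsFractionRing.toField R).toIsField
  intro U hpure huni
  have hφ : Function.Injective ((Algebra.linearMap R (Localization.AtPrime L)).compLeft Λ) :=
    (IsLocalization.injective (Localization.AtPrime L) L.primeCompl_le_nonZeroDivisors).comp_left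
  obtain ⟨V, hV⟩ := h _ (hpure.comap _)
    (huni.comap L.primeCompl L.primeCompl_le_nonZeroDivisors hφ)
  exact ⟨_, isCompl_saturation_map hL hpure hV⟩
end

section
/- Let R be a valuation domain, L a prime ideal of R, and A a proper ideal of R_L. If R/A is complete in the R/A-topology, then R_L/A is complete in the R_L/A-topology. -/
open Pointwise

/-!
Fix `i₀` with `B i₀` proper. Every nonunit of `R_L` comes from `R`, so the differences
`a i - a i₀` for `B i ≤ B i₀` lift to `R`; contraction of ideals reflects inclusion, so the lifted
family is coherent for the contracted ideals, whose intersection is the contraction of `A`.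
A common point `c` in `R` then yields the common point `c + a i₀`: the remaining cosets, those with
`B i₀ ≤ B i`, contain it by coherence, and there are no others since the ideals of `R_L` form a
chain.
-/

universe u

theorem iInf_subtype_le_eq_iInf {α ι : Type*} [CompleteLattice α] (f : ι → α) (i₀ : ι)
    (htotal : ∀ i, f i ≤ f i₀ ∨ f i₀ ≤ f i) :
    ⨅ i : {i // f i ≤ f i₀}, f i = ⨅ i, f i :=
  le_antisymm
    (le_iInf fun i => (htotal i).elim (fun h => iInf_le_of_le ⟨i, h⟩ le_rfl)
      (fun h => iInf_le_of_le ⟨i₀, le_rfl⟩ h))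
    (le_iInf_comp f Subtype.val)

namespace IsLocalization

theorem preValuationRing {R : Type*} [CommRing R] [PreValuationRing R] (M : Submonoid R)
    (S : Type*) [CommRing S] [Algebra R S] [IsLocalization M S] : PreValuationRing S :=
  PreValuationRing.iff_ideal_total.mpr ⟨fun I J => by
    simpa only [under_le_under_iff M] using
      (PreValuationRing.iff_ideal_total.mp ‹_›).total (I.under R) (J.under R)⟩

/-- Writing `x = r / s`, either `s ∣ r` and `x` comes from `R`, or `r ∣ s` and `x` is a unit. -/
theorem exists_algebraMap_eq_of_not_isUnit {R : Type*} [CommRing R] [PreValuationRing R]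
    (M : Submonoid R) {S : Type*} [CommRing S] [Algebra R S] [IsLocalization M S] {x : S}
    (hx : ¬IsUnit x) : ∃ r : R, algebraMap R S r = x := by
  obtain ⟨⟨r, s⟩, hrs⟩ := surj M x
  have hs : IsUnit (algebraMap R S s) := map_units S s
  obtain ⟨c, hc | hc⟩ := PreValuationRing.cond (s : R) r
  · refine ⟨c, hs.mul_left_cancel ?_⟩
    rw [← map_mul, hc, ← hrs, mul_comm]
  · refine absurd (IsUnit.of_mul_eq_one (algebraMap R S c) (hs.mul_left_cancel ?_)) hx
    dsimp only at hrs
    rw [mul_one, ← mul_assoc, mul_comm _ x, hrs, ← map_mul, hc]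

end IsLocalization

/-- if `A` is a proper ideal of `R_L` and `R/A` is complete in the
`R/A`-topology, then `R_L/A` is complete in the `R_L/A`-topology. -/
theorem stmt_7 {R : Type u} [CommRing R] [IsDomain R] [ValuationRing R]
    (L : Ideal R) [L.IsPrime] (A : Ideal (Localization.AtPrime L)) (hA : A ≠ ⊤)
    (h : IsCompleteQuot R (A.comap (algebraMap R (Localization.AtPrime L)))) :
    IsCompleteQuot (Localization.AtPrime L) A := by
  intro ι a B hAB hcoh hinf
  set φ := algebraMap R (Localization.AtPrime L)
  have := IsLocalization.preValuationRing L.primeCompl (Localization.AtPrime L)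
  obtain ⟨i₀, hi₀⟩ : ∃ i₀, B i₀ ≠ ⊤ := by
    by_contra! hall
    exact hA (by rw [← hinf, iInf_eq_top.mpr hall])
  have htotal (i : ι) : B i ≤ B i₀ ∨ B i₀ ≤ B i := total_of (· ≤ ·) _ _
  choose b hb using fun j : {i // B i ≤ B i₀} =>
    IsLocalization.exists_algebraMap_eq_of_not_isUnit L.primeCompl
      fun hu => hi₀ (Ideal.eq_top_of_isUnit_mem _ (hcoh j i₀ j.2) hu)
  obtain ⟨c, hc⟩ := h _ b (fun j => (B j).comap φ) (fun j => Ideal.comap_mono (hAB j))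
    (fun i j hij => by
      rw [Ideal.mem_comap, map_sub, hb, hb, sub_sub_sub_cancel_right]
      exact hcoh i j ((IsLocalization.under_le_under_iff L.primeCompl _).mp hij))
    (by rw [← Ideal.comap_iInf, iInf_subtype_le_eq_iInf B i₀ htotal, hinf])
  have hc' (j : {i // B i ≤ B i₀}) : φ c + a i₀ - a j ∈ B j := by
    rw [← sub_sub_eq_add_sub, ← hb, ← map_sub]
    exact hc j
  refine ⟨φ c + a i₀, fun i => (htotal i).elim (fun hle => hc' ⟨i, hle⟩) fun hge => ?_⟩
  simpa only [sub_add_sub_cancel] using Ideal.add_mem _ (hge (hc' ⟨i₀, le_rfl⟩)) (hcoh i₀ i hge)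
end

section
/- Let R be a valuation domain whose quotient field Q is countably generated as an R-module. Then R is slender if and only if R is not complete in the R-topology. -/
open Pointwise

/-!
Countable generation of `Q` yields a chain `r₀ ∣ r₁ ∣ ⋯` of nonzero elements whose principal
ideals form a base of the `R`-topology (unless `R` is a field, where both sides fail). If `R` is
complete, `x ↦ ∑ₙ xₙ rₙ` converges and defines a map `R^ℕ → R` with `eₙ ↦ rₙ ≠ 0`, so `R` is not
slender. Conversely, a map that is nonzero on infinitely many `eₙ` may be taken nonzero on all of
them; it then sums every Cauchy sequence for a refined chain `cₖ`, and in a valuation domain, where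
ideals are totally ordered, every Cauchy net reduces to such a sequence.
-/

open Finset

universe u

section NullChain

variable {R : Type u} [CommRing R]

/-- In a valuation domain the ideals `r n • R` of such a chain are a base of the `R`-topology. -/
structure IsNullChain (r : ℕ → R) : Prop where
  ne_zero : ∀ n, r n ≠ 0
  dvd_succ : ∀ n, r n ∣ r (n + 1)
  eq_zero_of_forall_dvd : ∀ x, (∀ n, r n ∣ x) → x = 0

namespace IsNullChain

variable {r : ℕ → R}

theorem dvd_of_le (hr : IsNullChain r) {k j : ℕ} (hkj : k ≤ j) : r k ∣ r j := by
  induction j, hkj using Nat.le_induction with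
  | base => exact dvd_rfl
  | succ n _ ih => exact ih.trans (hr.dvd_succ n)

theorem antitone_span (hr : IsNullChain r) : Antitone fun n => Ideal.span {r n} :=
  fun _ _ h => Ideal.span_singleton_le_span_singleton.2 (hr.dvd_of_le h)

theorem of_forall_exists_dvd [IsDomain R] (hF : ¬ IsField R) (h0 : ∀ n, r n ≠ 0)
    (hsucc : ∀ n, r n ∣ r (n + 1)) (hcof : ∀ a : R, a ≠ 0 → ∃ n, a ∣ r n) :
    IsNullChain r := by
  refine ⟨h0, hsucc, fun x hx => by_contra fun hx0 => hF ?_⟩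
  obtain ⟨n, hn⟩ := hcof (x * x) (mul_ne_zero hx0 hx0)
  obtain ⟨t, ht⟩ := hn.trans (hx n)
  have hxu : IsUnit x :=
    .of_mul_eq_one t <| mul_left_cancel₀ hx0 <| by rw [mul_one, ← mul_assoc, ← ht]
  refine ⟨exists_pair_ne R, mul_comm, fun {a} ha => ?_⟩
  obtain ⟨m, hm⟩ := hcof a ha
  exact (isUnit_of_dvd_unit (hm.trans (hx m)) hxu).exists_right_inv

end IsNullChain

end NullChain

theorem exists_cofinal_chain_of_countable_span {R : Type u} [CommRing R] [IsDomain R]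
    (hQ : ∃ S : Set (FractionRing R), S.Countable ∧ Submodule.span R S = ⊤) :
    ∃ r : ℕ → R, (∀ n, r n ≠ 0) ∧ (∀ n, r n ∣ r (n + 1)) ∧ ∀ a : R, a ≠ 0 → ∃ n, a ∣ r n := by
  obtain ⟨S, hS, hspan⟩ := hQ
  have hne : S.Nonempty := Set.nonempty_iff_ne_empty.2 fun h => by
    simp [h] at hspan
  obtain ⟨q, rfl⟩ := hS.exists_eq_range hne
  choose s hs using fun n => IsLocalization.exists_integer_multiple (nonZeroDivisors R) (q n)
  set r : ℕ → R := fun n => ∏ i ∈ range (n + 1), (s i : R)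
  have hmono : ∀ {n m}, n ≤ m → r n ∣ r m := fun h =>
    prod_dvd_prod_of_subset _ _ _ (range_subset_range.2 (Nat.succ_le_succ h))
  -- `⋃ₙ (r n)⁻¹ R` is a submodule containing the generators, hence everything
  have hint : ∀ x ∈ Submodule.span R (Set.range q),
      ∃ n, IsLocalization.IsInteger R (r n • x) := by
    intro x hx
    induction hx using Submodule.span_induction with
    | mem x hx =>
      obtain ⟨n, rfl⟩ := hx
      refine ⟨n, ?_⟩
      rw [show r n = _ * _ from prod_range_succ _ n, mul_smul]
      exact IsLocalization.isInteger_smul (hs n)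
    | zero => exact ⟨0, by simpa using IsLocalization.isInteger_zero⟩
    | add x y _ _ hx hy =>
      obtain ⟨n, hn⟩ := hx
      obtain ⟨m, hm⟩ := hy
      obtain ⟨a, ha⟩ := hmono (le_max_left n m)
      obtain ⟨b, hb⟩ := hmono (le_max_right n m)
      refine ⟨max n m, smul_add (r (max n m)) x y ▸ IsLocalization.isInteger_add ?_ ?_⟩
      · rw [ha, mul_comm, mul_smul]
        exact IsLocalization.isInteger_smul hn
      · rw [hb, mul_comm, mul_smul]
        exact IsLocalization.isInteger_smul hm
    | smul c x _ hx =>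
      obtain ⟨n, hn⟩ := hx
      exact ⟨n, smul_comm (r n) c x ▸ IsLocalization.isInteger_smul hn⟩
  refine ⟨r, fun n => prod_ne_zero_iff.2 fun i _ => nonZeroDivisors.ne_zero (s i).2,
    fun n => hmono n.le_succ, fun a ha => ?_⟩
  obtain ⟨n, b, hb⟩ := hint (algebraMap R (FractionRing R) a)⁻¹ (hspan ▸ Submodule.mem_top)
  refine ⟨n, b, IsFractionRing.injective R (FractionRing R) ?_⟩
  have ha' : algebraMap R (FractionRing R) a ≠ 0 :=
    (map_ne_zero_iff _ (IsFractionRing.injective R (FractionRing R))).2 ha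
  rw [map_mul, hb, Algebra.smul_def, mul_comm _ (_⁻¹), ← mul_assoc, mul_inv_cancel₀ ha', one_mul]

theorem exists_isNullChain_of_countable_span {R : Type u} [CommRing R] [IsDomain R]
    (hF : ¬ IsField R)
    (hQ : ∃ S : Set (FractionRing R), S.Countable ∧ Submodule.span R S = ⊤) :
    ∃ r : ℕ → R, IsNullChain r := by
  obtain ⟨r, h0, hsucc, hcof⟩ := exists_cofinal_chain_of_countable_span hQ
  exact ⟨r, .of_forall_exists_dvd hF h0 hsucc hcof⟩

theorem sum_range_sub_sum_range_mem {R : Type*} [Ring R] {I : ℕ → Ideal R} (hI : Antitone I)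
    {g : ℕ → R} (hg : ∀ n, g n ∈ I n) (i j : ℕ) :
    ∑ n ∈ range i, g n - ∑ n ∈ range j, g n ∈ I (min i j) := by
  have hIco : ∀ {i j}, i ≤ j → ∑ n ∈ Ico i j, g n ∈ I i := fun _ =>
    Ideal.sum_mem _ fun n hn => hI (mem_Ico.1 hn).1 (hg n)
  rcases le_total i j with h | h
  · rw [min_eq_left h, ← sum_range_add_sum_Ico g h, sub_add_cancel_left]
    exact neg_mem (hIco h)
  · rw [min_eq_right h, ← sum_range_add_sum_Ico g h, add_sub_cancel_left]
    exact hIco h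

theorem LinearMap.exists_comp_eq_of_injective {R M N P : Type*} [Semiring R] [AddCommMonoid M]
    [AddCommMonoid N] [AddCommMonoid P] [Module R M] [Module R N] [Module R P] {q : M →ₗ[R] N}
    (hq : Function.Injective q) {s : P →ₗ[R] N} (hs : ∀ x, s x ∈ LinearMap.range q) :
    ∃ f : P →ₗ[R] M, ∀ x, q (f x) = s x :=
  ⟨(LinearEquiv.ofInjective q hq).symm.toLinearMap ∘ₗ s.codRestrict _ hs, fun x => by simp⟩

namespace IsNullChain

variable {R : Type u} [CommRing R] {r : ℕ → R}

theorem exists_sub_sum_range_mem_of_isCompleteQuot (hr : IsNullChain r)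
    (hC : IsCompleteQuot R ⊥) {g : ℕ → R} (hg : ∀ n, r n ∣ g n) :
    ∃ c, ∀ k, c - ∑ n ∈ range k, g n ∈ Ideal.span {r k} := by
  have hcoh : ∀ i j : ULift.{u} ℕ, Ideal.span {r i.down} ≤ Ideal.span {r j.down} →
      ∑ n ∈ range i.down, g n - ∑ n ∈ range j.down, g n ∈ Ideal.span {r j.down} := by
    intro i j hij
    have := sum_range_sub_sum_range_mem hr.antitone_span
      (fun n => Ideal.mem_span_singleton.2 (hg n)) i.down j.down
    rcases le_total i.down j.down with h | h
    · rw [min_eq_left h] at this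
      exact hij this
    · rwa [min_eq_right h] at this
  have hinf : (⨅ k : ULift.{u} ℕ, Ideal.span {r k.down}) = ⊥ := eq_bot_iff.2 fun y hy =>
    hr.eq_zero_of_forall_dvd y fun k => Ideal.mem_span_singleton.1 (Ideal.mem_iInf.1 hy ⟨k⟩)
  obtain ⟨c, hc⟩ := hC (ULift.{u} ℕ) _ _ (fun _ => bot_le) hcoh hinf
  exact ⟨c, fun k => hc ⟨k⟩⟩

/-- The map `x ↦ ∑ₙ xₙ rₙ`, summed in the `R`-topology. -/
theorem exists_linearMap_of_isCompleteQuot (hr : IsNullChain r) (hC : IsCompleteQuot R ⊥) :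
    ∃ f : (ℕ → R) →ₗ[R] R, ∀ n, f (Pi.single n 1) = r n := by
  let I : ℕ → Ideal R := fun k => Ideal.span {r k}
  let partialSum : ℕ → (ℕ → R) →ₗ[R] R := fun k => ∑ n ∈ range k, r n • LinearMap.proj n
  have hps : ∀ k x, partialSum k x = ∑ n ∈ range k, r n * x n := fun k x => by
    simp [partialSum]
  let q : R →ₗ[R] ((k : ℕ) → R ⧸ I k) := LinearMap.pi fun k => (I k).mkQ
  let s : (ℕ → R) →ₗ[R] ((k : ℕ) → R ⧸ I k) := LinearMap.pi fun k => (I k).mkQ ∘ₗ partialSum k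
  have hq : Function.Injective q := by
    refine (injective_iff_map_eq_zero q).2 fun x hx => hr.eq_zero_of_forall_dvd x fun k => ?_
    exact Ideal.mem_span_singleton.1 <| (Submodule.Quotient.mk_eq_zero _).1 (congr_fun hx k)
  have hs : ∀ x, s x ∈ LinearMap.range q := fun x => by
    obtain ⟨c, hc⟩ := hr.exists_sub_sum_range_mem_of_isCompleteQuot hC
      (g := fun n => r n * x n) fun n => dvd_mul_right _ _
    exact ⟨c, funext fun k => (Submodule.Quotient.eq _).2 (hps k x ▸ hc k)⟩
  obtain ⟨f, hf⟩ := LinearMap.exists_comp_eq_of_injective hq hs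
  refine ⟨f, fun n => hq <| (hf _).trans <| funext fun k => (Submodule.Quotient.eq _).2 ?_⟩
  simp only [hps, Pi.single_apply, mul_ite, mul_one, mul_zero, sum_ite_eq', mem_range]
  split_ifs with h
  · simp
  · simpa using Ideal.mem_span_singleton.2 (hr.dvd_of_le (not_lt.1 h))

end IsNullChain

theorem Function.extend_pi_single {ι η M : Type*} [DecidableEq ι] [DecidableEq η] [Zero M]
    {φ : ι → η} (hφ : Function.Injective φ) (i : ι) (x : M) :
    Function.extend φ (Pi.single i x) 0 = Pi.single (φ i) x := by
  funext m
  by_cases hm : ∃ j, φ j = m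
  · obtain ⟨j, rfl⟩ := hm
    simp [hφ.extend_apply, Pi.single_apply, hφ.eq_iff]
  · rw [Function.extend_apply' _ _ _ hm, Pi.single_apply, if_neg fun h => hm ⟨i, h.symm⟩]
    rfl

theorem exists_linearMap_pi_single_ne_zero_of_not_isSlender {R : Type*} [CommRing R] {M : Type*}
    [AddCommGroup M] [Module R M] (h : ¬ IsSlender R M) :
    ∃ g : (ℕ → R) →ₗ[R] M, ∀ n, g (Pi.single n 1) ≠ 0 := by
  simp only [IsSlender, not_forall, not_exists] at h
  obtain ⟨f, hf⟩ := h
  obtain ⟨φ, hφ, hne⟩ := Filter.extraction_of_frequently_atTop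
    (P := fun n => f (Pi.single n 1) ≠ 0) (Filter.frequently_atTop.2 fun n₀ => by simpa using hf n₀)
  refine ⟨f ∘ₗ Function.ExtendByZero.linearMap R φ, fun n => ?_⟩
  change f (Function.extend φ (Pi.single n 1) 0) ≠ 0
  rw [Function.extend_pi_single hφ.injective]
  exact hne n

theorem LinearMap.dvd_sub_sum_range_of_dvd {R : Type*} [CommRing R] (g : (ℕ → R) →ₗ[R] R)
    {x : ℕ → R} {d : R} {K : ℕ} (hd : ∀ k, K ≤ k → d ∣ x k) :
    d ∣ g x - ∑ k ∈ Finset.range K, x k * g (Pi.single k 1) := by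
  have htail : ∀ m, d ∣ (x - ∑ k ∈ Finset.range K, x k • Pi.single k 1 : ℕ → R) m := fun m => by
    by_cases hm : K ≤ m
    · simpa [Pi.single_apply, hm, not_lt.2 hm] using hd m hm
    · simp [Pi.single_apply, not_le.1 hm]
  choose y hy using htail
  have hx : x = ∑ k ∈ Finset.range K, x k • Pi.single k 1 + d • y :=
    sub_eq_iff_eq_add'.1 (funext hy)
  refine ⟨g y, ?_⟩
  nth_rw 1 [hx]
  simp [map_sum]

namespace IsNullChain

variable {R : Type u} [CommRing R] {r : ℕ → R}

def IsSeqComplete (c : ℕ → R) : Prop :=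
  ∀ b : ℕ → R, (∀ k, c k ∣ b (k + 1) - b k) → ∃ z, ∀ k, c k ∣ z - b k

/-- With `uₖ = g eₖ`, the limit of a Cauchy sequence `b` is `b₀ + g x` for
`xₖ = (bₖ₊₁ - bₖ) / uₖ`; refining the chain to `cₖ = rₖ u₀ ⋯ uₖ` makes these quotients exist
and tend to `0`. -/
theorem exists_isSeqComplete [IsDomain R] (hr : IsNullChain r) {g : (ℕ → R) →ₗ[R] R}
    (hg : ∀ n, g (Pi.single n 1) ≠ 0) : ∃ c : ℕ → R, IsNullChain c ∧ IsSeqComplete c := by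
  set u : ℕ → R := fun n => g (Pi.single n 1)
  set w : ℕ → R := fun k => r k * ∏ i ∈ range k, u i
  set c : ℕ → R := fun k => w k * u k
  have hw : ∀ {k j}, k ≤ j → w k ∣ w j := fun h =>
    mul_dvd_mul (hr.dvd_of_le h) (prod_dvd_prod_of_subset _ _ _ (range_subset_range.2 h))
  have hcw : ∀ k, c k ∣ w (k + 1) := fun k => by
    simp only [c, w, prod_range_succ, mul_assoc]
    exact mul_dvd_mul_right (hr.dvd_succ k) _
  have hrc : ∀ k, r k ∣ c k := fun k => (dvd_mul_right _ _).trans (dvd_mul_right _ _)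
  have hc : IsNullChain c :=
    ⟨fun k => mul_ne_zero (mul_ne_zero (hr.ne_zero k) (prod_ne_zero_iff.2 fun i _ => hg i)) (hg k),
      fun k => (hcw k).trans (dvd_mul_right _ _),
      fun x hx => hr.eq_zero_of_forall_dvd x fun n => (hrc n).trans (hx n)⟩
  refine ⟨c, hc, fun b hb => ?_⟩
  choose t ht using hb
  set x : ℕ → R := fun k => w k * t k
  have hlim : ∀ K, w K ∣ b 0 + g x - b K := fun K => by
    have hsum : ∑ k ∈ range K, x k * u k = b K - b 0 := by
      rw [← sum_range_sub]
      exact sum_congr rfl fun k _ => by rw [ht k]; ring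
    rw [show b 0 + g x - b K = g x - ∑ k ∈ range K, x k * u k by rw [hsum]; ring]
    exact g.dvd_sub_sum_range_of_dvd fun k hk => (hw hk).mul_right _
  refine ⟨b 0 + g x, fun K => ?_⟩
  rw [show b 0 + g x - b K = (b 0 + g x - b (K + 1)) + (b (K + 1) - b K) by ring]
  exact dvd_add ((hcw K).trans (hlim (K + 1))) ⟨t K, ht K⟩

end IsNullChain

section ValuationRing

variable {R : Type u} [CommRing R] [IsDomain R] [ValuationRing R]

theorem exists_le_span_singleton_of_iInf_eq_bot {ι : Type*} {B : ι → Ideal R}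
    (hB : ⨅ i, B i = ⊥) {x : R} (hx : x ≠ 0) : ∃ i, B i ≤ Ideal.span {x} := by
  obtain ⟨i, hi⟩ : ∃ i, x ∉ B i := by
    by_contra! h
    exact hx <| (Submodule.mem_bot R).1 <| hB ▸ Ideal.mem_iInf.2 h
  refine ⟨i, (total_of (· ≤ ·) (B i) (Ideal.span {x})).resolve_right fun h => hi ?_⟩
  exact h (Ideal.mem_span_singleton_self x)

theorem sub_mem_sup_of_coherent {ι : Type*} {a : ι → R} {B : ι → Ideal R}
    (hcoh : ∀ i j, B i ≤ B j → a i - a j ∈ B j) (i j : ι) : a i - a j ∈ B i ⊔ B j := by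
  rcases total_of (· ≤ ·) (B i) (B j) with h | h
  · exact Ideal.mem_sup_right (hcoh i j h)
  · exact Ideal.mem_sup_left (by simpa using neg_mem (hcoh j i h))

theorem IsNullChain.mem_of_forall_mem_span_sup {c : ℕ → R} (hc : IsNullChain c) {J : Ideal R}
    {x : R} (hx : ∀ k, x ∈ Ideal.span {c k} ⊔ J) : x ∈ J := by
  by_contra hxJ
  refine hxJ (hc.eq_zero_of_forall_dvd x (fun k => ?_) ▸ J.zero_mem)
  rcases total_of (· ≤ ·) (Ideal.span {c k}) J with h | h
  · exact absurd (sup_eq_right.2 h ▸ hx k) hxJ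
  · exact Ideal.mem_span_singleton.1 (sup_eq_left.2 h ▸ hx k)

theorem IsNullChain.isCompleteQuot_bot {c : ℕ → R} (hc : IsNullChain c) (h : IsSeqComplete c) :
    IsCompleteQuot R ⊥ := by
  intro ι a B _ hcoh hinf
  choose idx hidx using fun k => exists_le_span_singleton_of_iInf_eq_bot hinf (hc.ne_zero k)
  have hsub : ∀ k j, a (idx k) - a j ∈ Ideal.span {c k} ⊔ B j := fun k j =>
    sup_le_sup_right (hidx k) _ (sub_mem_sup_of_coherent hcoh (idx k) j)
  obtain ⟨z, hz⟩ := h (fun k => a (idx k)) fun k => by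
    have := sub_mem_sup_of_coherent hcoh (idx (k + 1)) (idx k)
    refine Ideal.mem_span_singleton.1 (sup_le ((hidx _).trans ?_) (hidx k) this)
    exact Ideal.span_singleton_le_span_singleton.2 (hc.dvd_succ k)
  refine ⟨z, fun j => hc.mem_of_forall_mem_span_sup fun k => ?_⟩
  rw [show z - a j = (z - a (idx k)) + (a (idx k) - a j) by ring]
  exact add_mem (Ideal.mem_sup_left (Ideal.mem_span_singleton.2 (hz k))) (hsub k j)

end ValuationRing

section Field

variable {R : Type u} [CommRing R]

theorem isCompleteQuot_bot_of_isField (hF : IsField R) : IsCompleteQuot R ⊥ := by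
  intro ι a B _ hcoh hinf
  obtain ⟨i, hi⟩ : ∃ i, B i ≠ ⊤ := by
    by_contra! h
    simp only [h, iInf_top] at hinf
    have := hF.nontrivial
    exact top_ne_bot hinf
  have hbot : B i = ⊥ :=
    ((Ring.isField_iff_isSimpleOrder_ideal.1 hF).eq_bot_or_eq_top _).resolve_right hi
  exact ⟨a i, fun j => hcoh i j (hbot ▸ bot_le)⟩

theorem not_isSlender_of_isField (hF : IsField R) : ¬ IsSlender R R := by
  let := hF.toField
  obtain ⟨h, hh⟩ := (Finsupp.lcoeFun : (ℕ →₀ R) →ₗ[R] ℕ → R).exists_leftInverse_of_injective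
    (LinearMap.ker_eq_bot.2 DFunLike.coe_injective)
  intro hS
  obtain ⟨n, hn⟩ := hS (Finsupp.linearCombination R (fun _ => (1 : R)) ∘ₗ h)
  have : h (Pi.single n 1) = Finsupp.single n 1 := by
    simpa [Finsupp.single_eq_pi_single] using LinearMap.congr_fun hh (Finsupp.single n 1)
  simpa [this] using hn n le_rfl

end Field

/-- if the quotient field `Q` of the valuation domain `R` is countably
generated as an `R`-module, then `R` is slender iff `R` is not complete in the
`R`-topology. -/
theorem stmt_8 {R : Type u} [CommRing R] [IsDomain R] [ValuationRing R]
    (hQ : ∃ S : Set (FractionRing R), S.Countable ∧ Submodule.span R S = ⊤) :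
    IsSlender R R ↔ ¬ IsCompleteQuot R ⊥ := by
  by_cases hF : IsField R
  · exact iff_of_false (not_isSlender_of_isField hF) (not_not.2 (isCompleteQuot_bot_of_isField hF))
  obtain ⟨r, hr⟩ := exists_isNullChain_of_countable_span hF hQ
  refine ⟨fun hS hC => ?_, fun hC => by_contra fun hS => hC ?_⟩
  · obtain ⟨f, hf⟩ := hr.exists_linearMap_of_isCompleteQuot hC
    obtain ⟨n, hn⟩ := hS f
    exact hr.ne_zero n ((hf n).symm.trans (hn n le_rfl))
  · obtain ⟨g, hg⟩ := exists_linearMap_pi_single_ne_zero_of_not_isSlender hS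
    obtain ⟨c, hc, hcs⟩ := hr.exists_isSeqComplete hg
    exact hc.isCompleteQuot_bot hcs
end

section
/- Let R be a valuation domain. The following are equivalent: (1) R_L is countably generated as an R-module for each prime ideal L; (2) for each prime ideal L which is the intersection of the set of primes properly containing L, there is a countable subset of that set whose intersection is L; (3) for each prime ideal L, the quotient field of R/L is countably generated as an R/L-module. -/
open Pointwise

/-!
Each of the three conditions says that for every prime `L` the set `R \ L` has a countable
subset that is cofinal for divisibility. For `R_L` this holds because a countable generating set
has its denominators in a countably generated submonoid. For the fraction field of `R/L` one
lifts divisibility from `R/L` to `R`: as `R` is local and divisibility is total, `s̄ ∣ t̄` with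
`t ∉ L` forces `s ∣ t`. If `L` is the intersection of the primes strictly above it, a countable
cofinal set and a countable family of such primes determine each other (pick `t ∉ P_t`, resp.
`s_P ∈ P \ L`). Otherwise take `s` in all those primes but not in `L`: for a nonunit `t ∉ L`
the radical of `tR` is a prime strictly above `L`, so `t ∣ sⁿ` for some `n`.
-/

theorem Set.Countable.submonoid_closure {M : Type*} [Monoid M] {s : Set M} (hs : s.Countable) :
    (Submonoid.closure s : Set M).Countable := by
  have := hs.to_subtype
  rw [Submonoid.closure_eq_mrange, MonoidHom.coe_mrange]
  exact Set.countable_range _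

def Submonoid.HasCountableCofinalSet {A : Type*} [CommMonoid A] (M : Submonoid A) : Prop :=
  ∃ T : Set A, T.Countable ∧ T ⊆ M ∧ ∀ m ∈ M, ∃ t ∈ T, m ∣ t

namespace IsLocalization

variable {A : Type*} [CommRing A] (M : Submonoid A) {S : Type*} [CommRing S] [Algebra A S]
  [IsLocalization M S]

theorem exists_countable_span_eq_top (hM : M.HasCountableCofinalSet) :
    ∃ G : Set S, G.Countable ∧ Submodule.span A G = ⊤ := by
  obtain ⟨T, hTc, hTM, hcof⟩ := hM
  have := hTc.to_subtype
  refine ⟨Set.range fun t : T => mk' S (1 : A) (⟨t, hTM t.2⟩ : M), Set.countable_range _, ?_⟩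
  refine Submodule.eq_top_iff'.2 fun x => ?_
  obtain ⟨⟨a, s⟩, rfl⟩ := mk'_surjective M x
  obtain ⟨t, ht, c, hc⟩ := hcof s s.2
  have hx : mk' S a s = (a * c) • mk' S (1 : A) (⟨t, hTM ht⟩ : M) := by
    rw [smul_mk'_one, mk'_eq_iff_eq]
    congr 1
    simp only [hc]
    ring
  show mk' S a s ∈ _
  rw [hx]
  exact Submodule.smul_mem _ _ (Submodule.subset_span ⟨⟨t, ht⟩, rfl⟩)

theorem hasCountableCofinalSet_of_span_eq_top (hM : M ≤ nonZeroDivisors A) {G : Set S}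
    (hG : G.Countable) (hspan : Submodule.span A G = ⊤) : M.HasCountableCofinalSet := by
  choose p hp using surj (S := S) M
  set T := (Submonoid.closure ((fun x => ((p x).2 : A)) '' G) : Set A)
  have hTM : T ⊆ M := Submonoid.closure_le.2 (Set.image_subset_iff.2 fun x _ => (p x).2.2)
  have hden : ∀ y ∈ Submodule.span A G,
      ∃ t ∈ T, y * algebraMap A S t ∈ Set.range (algebraMap A S) := by
    intro y hy
    induction hy using Submodule.span_induction with
    | mem x hx => exact ⟨_, Submonoid.subset_closure ⟨x, hx, rfl⟩, p x |>.1, (hp x).symm⟩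
    | zero => exact ⟨1, Submonoid.one_mem _, 0, by simp⟩
    | add x y _ _ hx hy =>
      obtain ⟨t, ht, a, ha⟩ := hx
      obtain ⟨u, hu, b, hb⟩ := hy
      refine ⟨t * u, Submonoid.mul_mem _ ht hu, a * u + t * b, ?_⟩
      simp only [map_add, map_mul, ha, hb]
      ring
    | smul r x _ hx =>
      obtain ⟨t, ht, a, ha⟩ := hx
      refine ⟨t, ht, r * a, ?_⟩
      rw [map_mul, ha, Algebra.smul_def]
      ring
  refine ⟨T, hG.image _ |>.submonoid_closure, hTM, fun m hm => ?_⟩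
  obtain ⟨t, ht, a, ha⟩ := hden (mk' S (1 : A) (⟨m, hm⟩ : M)) (hspan ▸ Submodule.mem_top)
  refine ⟨t, ht, a, IsLocalization.injective S hM ?_⟩
  rw [map_mul, ha, ← mul_assoc, mk'_spec' S (1 : A) (⟨m, hm⟩ : M), map_one, one_mul]

theorem exists_countable_span_eq_top_iff (hM : M ≤ nonZeroDivisors A) :
    (∃ G : Set S, G.Countable ∧ Submodule.span A G = ⊤) ↔ M.HasCountableCofinalSet :=
  ⟨fun ⟨_, hG, hspan⟩ => hasCountableCofinalSet_of_span_eq_top M hM hG hspan,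
    exists_countable_span_eq_top M⟩

end IsLocalization

namespace PreValuationRing

variable {R : Type*} [CommRing R] [PreValuationRing R]

theorem dvd_of_mem_of_notMem {I : Ideal R} {x t : R} (hx : x ∈ I) (ht : t ∉ I) : t ∣ x :=
  (ValuationRing.dvd_total t x).resolve_right fun ⟨c, hc⟩ => ht (hc ▸ I.mul_mem_right c hx)

theorem isPrime_radical {I : Ideal R} (hI : I ≠ ⊤) : I.radical.IsPrime := by
  rw [Ideal.radical_eq_sInf]
  refine Ideal.sInf_isPrime_of_isChain ?_ (fun P _ Q _ _ => Std.Total.total P Q) fun P hP => hP.2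
  obtain ⟨P, hP, hIP⟩ := Ideal.exists_le_maximal I hI
  exact ⟨P, hIP, hP.isPrime⟩

theorem dvd_of_mk_dvd_mk {L : Ideal R} [L.IsPrime] {s t : R} (ht : t ∉ L)
    (h : Ideal.Quotient.mk L s ∣ Ideal.Quotient.mk L t) : s ∣ t := by
  have : Nontrivial R := nontrivial_of_ne t 0 fun h => ht (h ▸ L.zero_mem)
  obtain hst | ⟨c, rfl⟩ := ValuationRing.dvd_total s t
  · exact hst
  obtain ⟨d, hd⟩ := h
  obtain ⟨d, rfl⟩ := Ideal.Quotient.mk_surjective d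
  -- `t = t c d` modulo `L` and `t ∉ L` force `c d ≡ 1`, hence `c` is a unit of the local ring `R`
  have hcd : Ideal.Quotient.mk L (c * d) = 1 := by
    refine mul_left_cancel₀ (Ideal.Quotient.eq_zero_iff_mem.not.2 ht) ?_
    calc Ideal.Quotient.mk L t * Ideal.Quotient.mk L (c * d)
        = Ideal.Quotient.mk L (t * c) * Ideal.Quotient.mk L d := by simp only [map_mul]; ring
      _ = Ideal.Quotient.mk L t * 1 := by rw [← hd, mul_one]
  have hc : IsUnit c := by
    refine isUnit_of_mul_isUnit_left
      (IsLocalRing.isUnit_of_mem_nonunits_one_sub_self (c * d) fun hu => ?_)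
    exact Ideal.IsPrime.ne_top ‹_› (Ideal.eq_top_of_isUnit_mem L (Ideal.Quotient.eq.1 hcd.symm) hu)
  exact hc.mul_right_dvd.2 dvd_rfl

variable (L : Ideal R) [L.IsPrime]

theorem hasCountableCofinalSet_nonZeroDivisors_quotient_iff :
    (nonZeroDivisors (R ⧸ L)).HasCountableCofinalSet ↔ L.primeCompl.HasCountableCofinalSet := by
  have mk_mem_iff (s : R) : Ideal.Quotient.mk L s ∈ nonZeroDivisors (R ⧸ L) ↔ s ∉ L :=
    mem_nonZeroDivisors_iff_ne_zero.trans Ideal.Quotient.eq_zero_iff_mem.not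
  constructor
  · rintro ⟨T, hTc, hTM, hcof⟩
    choose lift hlift using Ideal.Quotient.mk_surjective (I := L)
    have lift_notMem {u} (hu : u ∈ T) : lift u ∉ L :=
      (mk_mem_iff _).1 (by rw [hlift]; exact hTM hu)
    refine ⟨lift '' T, hTc.image _, ?_, fun s hs => ?_⟩
    · rintro _ ⟨u, hu, rfl⟩
      exact lift_notMem hu
    · obtain ⟨u, hu, hdvd⟩ := hcof _ ((mk_mem_iff s).2 hs)
      exact ⟨lift u, ⟨u, hu, rfl⟩, dvd_of_mk_dvd_mk (lift_notMem hu) (by rwa [hlift])⟩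
  · rintro ⟨T, hTc, hTM, hcof⟩
    refine ⟨Ideal.Quotient.mk L '' T, hTc.image _, ?_, fun m hm => ?_⟩
    · rintro _ ⟨u, hu, rfl⟩
      exact (mk_mem_iff u).2 (hTM hu)
    · obtain ⟨s, rfl⟩ := Ideal.Quotient.mk_surjective m
      obtain ⟨t, ht, hdvd⟩ := hcof s ((mk_mem_iff s).1 hm)
      exact ⟨_, ⟨t, ht, rfl⟩, map_dvd _ hdvd⟩

theorem hasCountableCofinalSet_primeCompl_of_lt_sInf
    (hlt : L < sInf {P : Ideal R | P.IsPrime ∧ L < P}) : L.primeCompl.HasCountableCofinalSet := by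
  obtain ⟨s, hs, hsL⟩ := SetLike.exists_of_lt hlt
  refine ⟨Set.range (s ^ ·), Set.countable_range _, ?_, fun t ht => ?_⟩
  · rintro _ ⟨n, rfl⟩
    exact fun h => hsL (‹L.IsPrime›.mem_of_pow_mem n h)
  by_cases hunit : IsUnit t
  · exact ⟨1, ⟨0, pow_zero s⟩, hunit.dvd⟩
  -- `√(tR)` is a prime strictly above `L`, hence contains `s`
  have hrad : (Ideal.span {t}).radical.IsPrime :=
    isPrime_radical (Ideal.span_singleton_eq_top.not.2 hunit)
  have hLt : L < (Ideal.span {t}).radical := by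
    refine SetLike.lt_iff_le_and_exists.2 ⟨fun x hx => ?_, t, ?_, ht⟩
    · exact Ideal.le_radical (Ideal.mem_span_singleton.2 (dvd_of_mem_of_notMem hx ht))
    · exact Ideal.le_radical (Ideal.mem_span_singleton_self t)
  obtain ⟨n, hn⟩ : s ∈ (Ideal.span {t}).radical :=
    sInf_le (show _ ∈ {P : Ideal R | P.IsPrime ∧ L < P} from ⟨hrad, hLt⟩) hs
  exact ⟨s ^ n, ⟨n, rfl⟩, Ideal.mem_span_singleton.1 hn⟩

theorem hasCountableCofinalSet_primeCompl_iff_of_sInf_eq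
    (hL : sInf {P : Ideal R | P.IsPrime ∧ L < P} = L) :
    L.primeCompl.HasCountableCofinalSet ↔ ∃ S : Set (Ideal R), S.Countable ∧
      S ⊆ {P : Ideal R | P.IsPrime ∧ L < P} ∧ sInf S = L := by
  constructor
  · rintro ⟨T, hTc, hTL, hcof⟩
    have hex (t : T) : ∃ P ∈ {P : Ideal R | P.IsPrime ∧ L < P}, (t : R) ∉ P := by
      have ht : (t : R) ∉ sInf {P : Ideal R | P.IsPrime ∧ L < P} := by rw [hL]; exact hTL t.2
      simpa [Submodule.mem_sInf, and_assoc] using ht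
    choose P hP htP using hex
    have := hTc.to_subtype
    refine ⟨Set.range P, Set.countable_range P, Set.range_subset_iff.2 hP, ?_⟩
    refine le_antisymm (fun x hx => ?_) (le_sInf (Set.forall_mem_range.2 fun t => (hP t).2.le))
    by_contra hxL
    obtain ⟨t, ht, hxt⟩ := hcof x hxL
    exact htP ⟨t, ht⟩ (Ideal.mem_of_dvd _ hxt (Submodule.mem_sInf.1 hx _ (Set.mem_range_self _)))
  · rintro ⟨S, hSc, hSU, hS⟩
    have hex (P : S) : ∃ s ∈ (P : Ideal R), s ∉ L := SetLike.exists_of_lt (hSU P.2).2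
    choose s hsP hsL using hex
    have := hSc.to_subtype
    refine ⟨Set.range s, Set.countable_range s, Set.range_subset_iff.2 hsL, fun x hx => ?_⟩
    have hxS : x ∉ sInf S := hS ▸ hx
    obtain ⟨P, hPS, hxP⟩ : ∃ P ∈ S, x ∉ P := by simpa [Submodule.mem_sInf] using hxS
    exact ⟨s ⟨P, hPS⟩, Set.mem_range_self _, dvd_of_mem_of_notMem (hsP _) hxP⟩

theorem hasCountableCofinalSet_primeCompl_iff :
    L.primeCompl.HasCountableCofinalSet ↔ (sInf {P : Ideal R | P.IsPrime ∧ L < P} = L →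
      ∃ S : Set (Ideal R), S.Countable ∧ S ⊆ {P : Ideal R | P.IsPrime ∧ L < P} ∧ sInf S = L) := by
  have hle : L ≤ sInf {P : Ideal R | P.IsPrime ∧ L < P} := le_sInf fun _ hP => hP.2.le
  obtain hL | hlt := hle.eq_or_lt
  · exact (hasCountableCofinalSet_primeCompl_iff_of_sInf_eq L hL.symm).trans
      ⟨fun h _ => h, fun h => h hL.symm⟩
  · exact iff_of_true (hasCountableCofinalSet_primeCompl_of_lt_sInf L hlt) fun h => absurd h hlt.ne'

end PreValuationRing

/-- equivalence of: (1) `R_L` countably generated over `R` for each prime `L`;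
(2) each prime `L` which is the intersection of the primes properly containing it is a
countable such intersection; (3) the quotient field of `R/L` is countably generated over
`R/L` for each prime `L`. -/
theorem stmt_9 {R : Type u} [CommRing R] [IsDomain R] [ValuationRing R] :
    ((∀ (L : Ideal R) [L.IsPrime],
        ∃ S : Set (Localization.AtPrime L), S.Countable ∧ Submodule.span R S = ⊤) ↔
      (∀ L : Ideal R, L.IsPrime →
        sInf {P : Ideal R | P.IsPrime ∧ L < P} = L →
        ∃ S : Set (Ideal R), S.Countable ∧ S ⊆ {P : Ideal R | P.IsPrime ∧ L < P} ∧
          sInf S = L))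
    ∧
    ((∀ (L : Ideal R) [L.IsPrime],
        ∃ S : Set (Localization.AtPrime L), S.Countable ∧ Submodule.span R S = ⊤) ↔
      (∀ L : Ideal R, L.IsPrime →
        ∃ S : Set (FractionRing (R ⧸ L)), S.Countable ∧ Submodule.span (R ⧸ L) S = ⊤)) := by
  have localization_iff : (∀ (L : Ideal R) [L.IsPrime],
      ∃ S : Set (Localization.AtPrime L), S.Countable ∧ Submodule.span R S = ⊤) ↔
      ∀ (L : Ideal R) [L.IsPrime], L.primeCompl.HasCountableCofinalSet :=
    forall_congr' fun L => forall_congr' fun _ =>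
      IsLocalization.exists_countable_span_eq_top_iff _ L.primeCompl_le_nonZeroDivisors
  have fractionRing_iff : (∀ L : Ideal R, L.IsPrime →
      ∃ S : Set (FractionRing (R ⧸ L)), S.Countable ∧ Submodule.span (R ⧸ L) S = ⊤) ↔
      ∀ (L : Ideal R) [L.IsPrime], L.primeCompl.HasCountableCofinalSet :=
    forall_congr' fun L => forall_congr' fun _ =>
      (IsLocalization.exists_countable_span_eq_top_iff _ le_rfl).trans
        (PreValuationRing.hasCountableCofinalSet_nonZeroDivisors_quotient_iff L)
  exact ⟨localization_iff.trans (forall_congr' fun L => forall_congr' fun _ =>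
      PreValuationRing.hasCountableCofinalSet_primeCompl_iff L),
    localization_iff.trans fractionRing_iff.symm⟩
end

section
/- Let R be a valuation domain, S a maximal immediate extension of R (so S ≅ the pure-injective hull of R), and x ∈ S \ R with breadth ideal B(x) = A, where A is archimedean and A ≠ Pa for all a ∈ R. Let U be a pure uniserial submodule of S/R containing x + R. Then U^♯ = P; consequently U is isomorphic to an ideal of R. -/
open Pointwise

/-!
If `s ∈ P` had `sU = U`, then purity of `U` would let every divisor `r` of `x + R` in `S/R` be
replaced by `rs`; in terms of the breadth ideal this says `r ∉ A → rs ∉ A`, which in a valuation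
domain forces `sA = A`, against `A` being archimedean. Units fix `U`, so `U^♯ = P`. Since
`S/R` is torsion-free (an immediate extension contains no element `1/c` with `c ∈ P`), for
any `0 ≠ s ∈ P` and `e ∈ U \ sU` uniseriality puts `sU` inside `Re ≅ R`, embedding `U` in `R`.
-/

section

variable {R : Type*} [CommRing R]

theorem Submodule.smul_eq_self_of_isUnit {M : Type*} [AddCommGroup M] [Module R M] {s : R}
    (hs : IsUnit s) (N : Submodule R M) : s • N = N := by
  refine le_antisymm (N.smul_le_self_of_tower s) fun m hm => ?_
  refine (N.mem_smul_pointwise_iff_exists m s).2 ⟨(↑hs.unit⁻¹ : R) • m, N.smul_mem _ hm, ?_⟩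
  rw [smul_smul, hs.mul_val_inv, one_smul]

theorem IsPureSub.exists_mul_smul_eq {M : Type*} [AddCommGroup M] [Module R M]
    {U : Submodule R M} (hU : IsPureSub R U) {s : R} (hsU : s • U = U) {r : R} {y : M}
    (hy : y ∈ U) (hdiv : ∃ m, r • m = y) : ∃ m, (r * s) • m = y := by
  obtain ⟨u, hu, rfl⟩ := hU r y hy hdiv
  rw [← hsU] at hu
  obtain ⟨w, -, rfl⟩ := (U.mem_smul_pointwise_iff_exists u s).1 hu
  exact ⟨w, mul_smul r s w⟩

end

section ValuationRing

variable {R : Type*} [CommRing R] [IsDomain R] [ValuationRing R]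

theorem ValuationRing.smul_ideal_eq_self_of_forall_mul_notMem {A : Ideal R} (hA : A ≠ ⊤)
    {s : R} (h : ∀ r ∉ A, r * s ∉ A) : s • A = A := by
  refine le_antisymm (A.smul_le_self_of_tower s) fun a ha => ?_
  have hs : s ∉ A := one_mul s ▸ h 1 ((Ideal.ne_top_iff_one A).1 hA)
  obtain ⟨c, hc | hc⟩ := ValuationRing.cond a s
  · exact absurd (hc ▸ A.mul_mem_right c ha) hs
  · have hcA : c ∈ A := by
      by_contra hcA
      exact h c hcA (mul_comm s c ▸ hc ▸ ha)
    exact (A.mem_smul_pointwise_iff_exists a s).2 ⟨c, hcA, hc⟩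

theorem smul_mem_span_singleton_of_forall_smul_ne {N : Type*} [AddCommGroup N] [Module R N]
    (huni : ∀ A B : Submodule R N, A ≤ B ∨ B ≤ A) {s : R} {e : N} (he : ∀ n, s • n ≠ e)
    (n : N) : s • n ∈ R ∙ e := by
  rcases huni (R ∙ n) (R ∙ e) with h | h
  · obtain ⟨r, rfl⟩ := Submodule.mem_span_singleton.1 (h (Submodule.mem_span_singleton_self n))
    exact Submodule.smul_mem _ s (Submodule.mem_span_singleton.2 ⟨r, rfl⟩)
  · obtain ⟨r, rfl⟩ := Submodule.mem_span_singleton.1 (h (Submodule.mem_span_singleton_self e))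
    obtain ⟨c, hc | hc⟩ := ValuationRing.cond r s
    · exact Submodule.mem_span_singleton.2 ⟨c, by rw [smul_smul, mul_comm, hc]⟩
    · exact absurd (by rw [smul_smul, hc]) (he (c • n))

theorem exists_ideal_linearEquiv_of_forall_smul_ne {N : Type*} [AddCommGroup N] [Module R N]
    [Module.IsTorsionFree R N] (huni : ∀ A B : Submodule R N, A ≤ B ∨ B ≤ A) {s : R}
    (hs : s ≠ 0) {e : N} (he : ∀ n, s • n ≠ e) : ∃ I : Ideal R, Nonempty (N ≃ₗ[R] I) := by
  have he0 : e ≠ 0 := by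
    rintro rfl
    exact he 0 (smul_zero s)
  let f : N →ₗ[R] R :=
    (LinearEquiv.toSpanNonzeroSingleton R N e he0).symm.toLinearMap ∘ₗ
      (LinearMap.lsmul R N s).codRestrict (R ∙ e) (smul_mem_span_singleton_of_forall_smul_ne huni he)
  have hf : Function.Injective f := by
    rw [LinearMap.coe_comp, LinearEquiv.coe_coe]
    exact (LinearEquiv.injective _).comp
      ((LinearMap.injective_codRestrict_iff _).2 (smul_right_injective N hs))
  exact ⟨LinearMap.range f, ⟨LinearEquiv.ofInjective f hf⟩⟩

end ValuationRing

section QuotientByRange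

variable {R S : Type*} [CommRing R] [CommRing S] [Algebra R S]

theorem exists_smul_eq_mk_iff (r : R) (x : S) :
    (∃ m : S ⧸ LinearMap.range (Algebra.linearMap R S), r • m = Submodule.Quotient.mk x) ↔
      ∃ (a : R) (t : S), x = algebraMap R S a + algebraMap R S r * t := by
  constructor
  · rintro ⟨m, hm⟩
    obtain ⟨t, rfl⟩ := Submodule.Quotient.mk_surjective _ m
    rw [← Submodule.Quotient.mk_smul, Submodule.Quotient.eq] at hm
    obtain ⟨a, ha⟩ := hm
    refine ⟨-a, t, ?_⟩
    rw [Algebra.linearMap_apply, Algebra.smul_def] at ha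
    rw [map_neg, ha]
    ring
  · rintro ⟨a, t, rfl⟩
    refine ⟨Submodule.Quotient.mk t, ?_⟩
    rw [← Submodule.Quotient.mk_smul, Submodule.Quotient.eq]
    exact ⟨-a, by rw [Algebra.linearMap_apply, Algebra.smul_def, map_neg]; ring⟩

variable (himm : ∀ (s : S) (a : R), s - algebraMap R S a ≠ 0 →
  ∃ (b : R) (t : S), ¬ IsUnit t ∧ s - algebraMap R S b = (s - algebraMap R S a) * t)
include himm

theorem isUnit_of_algebraMap_mul_eq_one [IsLocalRing R] [Nontrivial S] {c : R} {z : S}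
    (h : algebraMap R S c * z = 1) : IsUnit c := by
  by_contra hc
  have hz : z - algebraMap R S 0 ≠ 0 := by
    rintro hz
    rw [map_zero, sub_zero] at hz
    simp [hz] at h
  obtain ⟨b, t, ht, hbt⟩ := himm z 0 hz
  rw [map_zero, sub_zero] at hbt
  have hct : algebraMap R S (1 - c * b) = t := by
    rw [map_sub, map_one, map_mul, ← h, ← mul_sub, hbt, ← mul_assoc, h, one_mul]
  exact ht (hct ▸ (IsLocalRing.isUnit_one_sub_self_of_mem_nonunits _
    (mul_mem_nonunits_left hc)).map (algebraMap R S))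

theorem isTorsionFree_quotient_range [IsDomain R] [ValuationRing R] [IsDomain S]
    (hinj : Function.Injective (algebraMap R S)) :
    Module.IsTorsionFree R (S ⧸ LinearMap.range (Algebra.linearMap R S)) := by
  refine .of_smul_eq_zero fun r m hrm => or_iff_not_imp_left.2 fun hr => ?_
  obtain ⟨z, rfl⟩ := Submodule.Quotient.mk_surjective _ m
  rw [← Submodule.Quotient.mk_smul, Submodule.Quotient.mk_eq_zero] at hrm
  rw [Submodule.Quotient.mk_eq_zero]
  obtain ⟨w, hw⟩ := hrm
  rw [Algebra.linearMap_apply, Algebra.smul_def] at hw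
  have hr' : algebraMap R S r ≠ 0 := (map_ne_zero_iff _ hinj).2 hr
  obtain ⟨c, hc | hc⟩ := ValuationRing.cond r w
  · refine ⟨c, mul_left_cancel₀ hr' ?_⟩
    rw [Algebra.linearMap_apply, ← map_mul, hc, hw]
  · have hw0 : w ≠ 0 := by
      rintro rfl
      exact hr (by rw [← hc, zero_mul])
    have hcz : algebraMap R S c * z = 1 := by
      refine mul_left_cancel₀ ((map_ne_zero_iff _ hinj).2 hw0) ?_
      rw [← mul_assoc, ← map_mul, hc, hw, mul_one]
    have hcu := isUnit_of_algebraMap_mul_eq_one himm hcz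
    refine ⟨↑hcu.unit⁻¹, mul_left_cancel₀ (left_ne_zero_of_mul_eq_one hcz) ?_⟩
    rw [Algebra.linearMap_apply, ← map_mul, hcu.mul_val_inv, map_one, hcz]

end QuotientByRange

theorem stmt_15_general {R S : Type u} [CommRing R] [IsDomain R] [ValuationRing R]
    [CommRing S] [IsDomain S] [Algebra R S]
    (hinj : Function.Injective (algebraMap R S))
    (himm : ∀ (s : S) (a : R), s - algebraMap R S a ≠ 0 →
      ∃ (b : R) (t : S), ¬ IsUnit t ∧ s - algebraMap R S b = (s - algebraMap R S a) * t)
    (P : Ideal R) (hP : P.IsMaximal)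
    (x : S)
    (A : Ideal R)
    (hBx : ∀ r : R, r ∈ A ↔ ¬ ∃ (a : R) (t : S), x = algebraMap R S a + algebraMap R S r * t)
    (harch : ∀ s : R, s • A ≠ A ↔ s ∈ P)
    (U : Submodule R (S ⧸ LinearMap.range (Algebra.linearMap R S)))
    (hxU : Submodule.Quotient.mk x ∈ U)
    (hpure : IsPureSub R U) (huni : IsUniserialSub R U) :
    (∀ s : R, s • U ≠ U ↔ s ∈ P) ∧ ∃ I : Ideal R, Nonempty (↥U ≃ₗ[R] ↥I) := by
  have := isTorsionFree_quotient_range himm hinj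
  have hA : ∀ r : R, r ∉ A ↔
      ∃ m : S ⧸ LinearMap.range (Algebra.linearMap R S), r • m = Submodule.Quotient.mk x := by
    simp [hBx, exists_smul_eq_mk_iff]
  have hA_top : A ≠ ⊤ := (Ideal.ne_top_iff_one A).2 ((hA 1).2 ⟨_, one_smul R _⟩)
  obtain rfl := IsLocalRing.eq_maximalIdeal hP
  have hsharp : ∀ s : R, s • U ≠ U ↔ s ∈ IsLocalRing.maximalIdeal R := by
    intro s
    rw [IsLocalRing.mem_maximalIdeal, mem_nonunits_iff, not_iff_not]
    refine ⟨fun hsU => ?_, fun hs => Submodule.smul_eq_self_of_isUnit hs U⟩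
    by_contra hs
    refine (harch s).2 hs (ValuationRing.smul_ideal_eq_self_of_forall_mul_notMem hA_top ?_)
    exact fun r hr => (hA (r * s)).2 (hpure.exists_mul_smul_eq hsU hxU ((hA r).1 hr))
  refine ⟨hsharp, ?_⟩
  have hA_bot : A ≠ ⊥ := fun h => (harch 0).2 (Ideal.zero_mem _) (by rw [h, Submodule.smul_bot'])
  obtain ⟨s, hsA, hs0⟩ := Submodule.exists_mem_ne_zero_of_ne_bot hA_bot
  have hsP : s ∈ IsLocalRing.maximalIdeal R := fun hs => hA_top (A.eq_top_of_isUnit_mem hsA hs)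
  obtain ⟨u, huU, hu⟩ := SetLike.exists_of_lt
    (lt_of_le_of_ne (U.smul_le_self_of_tower s) ((hsharp s).2 hsP))
  refine exists_ideal_linearEquiv_of_forall_smul_ne huni hs0 (e := ⟨u, huU⟩) fun n hn => hu ?_
  exact (U.mem_smul_pointwise_iff_exists u s).2 ⟨n, n.2, congrArg Subtype.val hn⟩

/-- let `S` be a maximal immediate extension of the valuation domain `R`
(immediate: no element of `S` has a best approximation in `R`; maximal: `S` is a maximal
valuation ring), `x ∈ S \ R` with breadth ideal `B(x) = A` archimedean, `A ≠ Pa` for all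
`a`. If `U` is a pure uniserial submodule of `S/R` containing `x + R`, then `U^♯ = P`, and
consequently `U` is isomorphic to an ideal of `R`. -/
theorem stmt_15 {R S : Type u} [CommRing R] [IsDomain R] [ValuationRing R]
    [CommRing S] [IsDomain S] [ValuationRing S] [Algebra R S]
    (hinj : Function.Injective (algebraMap R S))
    (himm : ∀ (s : S) (a : R), s - algebraMap R S a ≠ 0 →
      ∃ (b : R) (t : S), ¬ IsUnit t ∧ s - algebraMap R S b = (s - algebraMap R S a) * t)
    (hmax : IsMaximalVD S (IsLocalRing.maximalIdeal S))
    (P : Ideal R) (hP : P.IsMaximal)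
    (x : S) (hx : x ∉ (algebraMap R S).range)
    (A : Ideal R)
    (hBx : ∀ r : R, r ∈ A ↔ ¬ ∃ (a : R) (t : S), x = algebraMap R S a + algebraMap R S r * t)
    (harch : ∀ s : R, s • A ≠ A ↔ s ∈ P)
    (hPa : ∀ a : R, A ≠ Ideal.span {a} * P)
    (U : Submodule R (S ⧸ LinearMap.range (Algebra.linearMap R S)))
    (hxU : Submodule.Quotient.mk x ∈ U)
    (hpure : IsPureSub R U) (huni : IsUniserialSub R U) :
    (∀ s : R, s • U ≠ U ↔ s ∈ P) ∧ ∃ I : Ideal R, Nonempty (↥U ≃ₗ[R] ↥I) :=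
  stmt_15_general hinj himm P hP x A hBx harch U hxU hpure huni
end

section
/- Let R be a valuation domain, A a proper ideal, and suppose A = r·A^♯ for some nonzero r ∈ R. If R/A^♯ is complete in the R/A^♯-topology, then R/A is complete in the R/A-topology. -/
open Pointwise

/-!
Since `B = A^♯` is proper and `A = rB`, `r ∉ A`, so in the chain of ideals some `Bᵢ₀` lies in `(r)`.
On the cofinal part `Bᵢ ⊆ Bᵢ₀` of a coherent family `(aᵢ + Bᵢ)` all `aᵢ` agree with `aᵢ₀` modulo `r`,
and dividing by `r` gives a coherent family `(yᵢ + (Bᵢ : r))` whose ideals meet in `(rB : r) = B`.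
A common point `c'` of that family yields the common point `aᵢ₀ + r c'` of the original one.
-/

section ColonIdeals

variable {R : Type*} [CommRing R]

def IsCoherent {ι : Type*} (a : ι → R) (I : ι → Ideal R) : Prop :=
  ∀ i j, I i ≤ I j → a i - a j ∈ I j

namespace Ideal

theorem le_of_colon_span_singleton_le {I J : Ideal R} {r : R} (hI : I ≤ span {r})
    (h : I.colon (span {r}) ≤ J.colon (span {r})) : I ≤ J := by
  intro x hx
  obtain ⟨z, rfl⟩ := mem_span_singleton'.1 (hI hx)
  exact Ideal.mem_colon_span_singleton.1 (h (Ideal.mem_colon_span_singleton.2 hx))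

theorem span_singleton_mul_colon_span_singleton [IsDomain R] {r : R} (hr : r ≠ 0) (B : Ideal R) :
    (span {r} * B).colon (span {r}) = B := by
  ext x
  simp only [Ideal.mem_colon_span_singleton, mem_span_singleton_mul]
  constructor
  · rintro ⟨b, hb, hbx⟩
    rwa [← mul_left_cancel₀ hr (hbx.trans (mul_comm x r))]
  · exact fun hx ↦ ⟨x, hx, mul_comm r x⟩

end Ideal

section PreValuationRing

variable [PreValuationRing R] {ι : Type*}

theorem Ideal.exists_le_span_singleton_of_notMem_iInf {I : ι → Ideal R} {r : R}
    (hr : r ∉ ⨅ i, I i) : ∃ i, I i ≤ span {r} := by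
  by_contra! h
  exact hr <| mem_iInf.2 fun i ↦
    (total_of (· ≤ ·) (I i) _).resolve_left (h i) (mem_span_singleton_self r)

theorem Ideal.iInf_subtype_le_eq_iInf (I : ι → Ideal R) (i₀ : ι) :
    ⨅ i : {i // I i ≤ I i₀}, I i = ⨅ i, I i := by
  refine le_antisymm (iInf_mono' fun i ↦ ?_) (le_iInf fun i ↦ iInf_le _ _)
  rcases total_of (· ≤ ·) (I i) (I i₀) with hle | hge
  · exact ⟨⟨i, hle⟩, le_rfl⟩
  · exact ⟨⟨i₀, le_rfl⟩, hge⟩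

theorem IsCoherent.sub_mem_of_forall_le {a : ι → R} {I : ι → Ideal R} (hcoh : IsCoherent a I)
    (i₀ : ι) {c : R} (hc : ∀ i, I i ≤ I i₀ → c - a i ∈ I i) (i : ι) : c - a i ∈ I i := by
  rcases total_of (· ≤ ·) (I i) (I i₀) with hle | hge
  · exact hc i hle
  · rw [← sub_add_sub_cancel c (a i₀) (a i)]
    exact add_mem (hge (hc i₀ le_rfl)) (hcoh i₀ i hge)

end PreValuationRing

theorem IsCoherent.colon_span_singleton {ι : Type*} {a y : ι → R} {I : ι → Ideal R} {b r : R}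
    (hcoh : IsCoherent a I) (hI : ∀ i, I i ≤ Ideal.span {r}) (hy : ∀ i, a i = b + r * y i) :
    IsCoherent y fun i ↦ (I i).colon (Ideal.span {r}) := by
  intro i j hij
  have hdiff : a i - a j = (y i - y j) * r := by rw [hy, hy]; ring
  have hIij : I i ≤ I j := Ideal.le_of_colon_span_singleton_le (hI i) hij
  exact Ideal.mem_colon_span_singleton.2 (hdiff ▸ hcoh i j hIij)

end ColonIdeals

theorem stmt_17_general {R : Type u} [CommRing R] [IsDomain R] [ValuationRing R]
    (A : Ideal R)
    (B : Ideal R) (hB : ∀ s : R, s ∈ B ↔ s • A ≠ A)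
    (r : R) (hr : r ≠ 0) (hAr : A = Ideal.span {r} * B)
    (h : IsCompleteQuot R B) :
    IsCompleteQuot R A := by
  intro ι a I hAI hcoh hinf
  have hBA : A.colon (Ideal.span {r}) = B :=
    hAr ▸ Ideal.span_singleton_mul_colon_span_singleton hr B
  have h1B : (1 : R) ∉ B := fun h1 ↦ (hB 1).1 h1 (one_smul _ _)
  have hrA : r ∉ ⨅ i, I i := by
    rw [hinf]
    exact fun hrA ↦ h1B (hBA ▸ Ideal.mem_colon_span_singleton.2 (by rwa [one_mul]))
  obtain ⟨i₀, hi₀⟩ := Ideal.exists_le_span_singleton_of_notMem_iInf hrA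
  have hdiv (j : {i // I i ≤ I i₀}) : ∃ y, a j = a i₀ + r * y := by
    obtain ⟨y, hy⟩ := Ideal.mem_span_singleton.1 (hi₀ (hcoh j i₀ j.2))
    exact ⟨y, by rw [← hy]; ring⟩
  choose y hy using hdiv
  obtain ⟨c', hc'⟩ := h _ y (fun j ↦ (I j).colon (Ideal.span {r}))
    (fun j ↦ hBA ▸ Submodule.colon_mono (hAI j) le_rfl)
    (IsCoherent.colon_span_singleton (fun i j ↦ hcoh i j) (fun j ↦ j.2.trans hi₀) hy)
    (by rw [← Submodule.iInf_colon, Ideal.iInf_subtype_le_eq_iInf, hinf, hBA])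
  refine ⟨a i₀ + r * c', IsCoherent.sub_mem_of_forall_le hcoh i₀ fun i hi ↦ ?_⟩
  have hsub : a i₀ + r * c' - a i = (c' - y ⟨i, hi⟩) * r := by rw [hy ⟨i, hi⟩]; ring
  exact hsub ▸ Ideal.mem_colon_span_singleton.1 (hc' ⟨i, hi⟩)

/-- if `A = r·A^♯` for some nonzero `r` and `R/A^♯` is complete in the
`R/A^♯`-topology, then `R/A` is complete in the `R/A`-topology. -/
theorem stmt_17 {R : Type u} [CommRing R] [IsDomain R] [ValuationRing R]
    (A : Ideal R) (hA : A ≠ ⊤)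
    (B : Ideal R) (hB : ∀ s : R, s ∈ B ↔ s • A ≠ A)
    (r : R) (hr : r ≠ 0) (hAr : A = Ideal.span {r} * B)
    (h : IsCompleteQuot R B) :
    IsCompleteQuot R A :=
  stmt_17_general A B hB r hr hAr h
end

section
/- Let R be a valuation domain with maximal ideal P and A a proper ideal of R. Then R/A is Hausdorff in the R/A-topology if and only if A ≠ Pa for every nonzero a ∈ R. -/
open Pointwise

/-!
In a valuation ring every ideal `A` with `x ∉ A` lies below `xP`, while `x ∉ xP` when `x ≠ 0`.
So an `x ∉ A` lies in every ideal strictly above `A` exactly when `A = xP`: if `A < xP` then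
`xP` itself misses `x`, and if `A = xP` then an ideal `B ∌ x` satisfies `B ≤ xP = A`.
-/

open IsLocalRing

namespace Ideal

variable {R : Type*} [CommRing R] [IsLocalRing R] {A : Ideal R} {x : R}

theorem le_span_singleton_mul_maximalIdeal_of_notMem [PreValuationRing R] (hx : x ∉ A) :
    A ≤ span {x} * maximalIdeal R := by
  intro y hy
  rcases ValuationRing.dvd_total x y with ⟨c, rfl⟩ | hyx
  · exact mem_span_singleton_mul.mpr ⟨c, fun hc => hx ((mul_unit_mem_iff_mem A hc).mp hy), rfl⟩
  · exact absurd (A.mem_of_dvd hyx hy) hx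

theorem notMem_span_singleton_mul_maximalIdeal [NoZeroDivisors R] (hx : x ≠ 0) :
    x ∉ span {x} * maximalIdeal R := by
  rw [mem_span_singleton_mul]
  rintro ⟨z, hz, hxz⟩
  have hz1 : z = 1 := by
    have : x * (1 - z) = 0 := by rw [mul_sub, mul_one, hxz, sub_self]
    exact (sub_eq_zero.mp ((mul_eq_zero.mp this).resolve_left hx)).symm
  exact (maximalIdeal.isMaximal R).ne_top ((eq_top_iff_one _).mpr (hz1 ▸ hz))

theorem mem_sInf_gt_iff [NoZeroDivisors R] [PreValuationRing R] (hx : x ∉ A) :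
    x ∈ sInf {B : Ideal R | A < B} ↔ A = span {x} * maximalIdeal R := by
  constructor
  · intro hmem
    refine (le_span_singleton_mul_maximalIdeal_of_notMem hx).eq_of_not_lt fun hlt => ?_
    have hx0 : x ≠ 0 := fun h => hx (h ▸ A.zero_mem)
    exact notMem_span_singleton_mul_maximalIdeal hx0 (Submodule.mem_sInf.mp hmem _ hlt)
  · intro hA
    refine Submodule.mem_sInf.mpr fun B (hB : A < B) => ?_
    by_contra hxB
    exact (le_span_singleton_mul_maximalIdeal_of_notMem hxB).not_gt (hA ▸ hB)

end Ideal

theorem stmt_19_general {R : Type u} [CommRing R] [IsDomain R] [ValuationRing R]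
    (P : Ideal R) (hP : P.IsMaximal) (A : Ideal R) :
    sInf {B : Ideal R | A < B} = A ↔ ∀ a : R, a ≠ 0 → A ≠ Ideal.span {a} * P := by
  obtain rfl := IsLocalRing.eq_maximalIdeal hP
  have hle : A ≤ sInf {B : Ideal R | A < B} := le_sInf fun _ hB => hB.le
  rw [le_antisymm_iff, and_iff_left hle]
  constructor
  · rintro h a ha rfl
    have haA := Ideal.notMem_span_singleton_mul_maximalIdeal ha
    exact haA (h ((Ideal.mem_sInf_gt_iff haA).mpr rfl))
  · intro h x hx
    by_contra hxA
    exact h x (fun h0 => hxA (h0 ▸ A.zero_mem)) ((Ideal.mem_sInf_gt_iff hxA).mp hx)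

/-- `R/A` is Hausdorff in the `R/A`-topology iff `A ≠ Pa` for every nonzero
`a`. -/
theorem stmt_19 {R : Type u} [CommRing R] [IsDomain R] [ValuationRing R]
    (P : Ideal R) (hP : P.IsMaximal) (A : Ideal R) (hA : A ≠ ⊤) :
    sInf {B : Ideal R | A < B} = A ↔ ∀ a : R, a ≠ 0 → A ≠ Ideal.span {a} * P :=
  stmt_19_general P hP A
end
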